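/- arXiv:2511.00708 — 3 statements merged into one kernel-verified Lean document; each statement's English description precedes it below -/
import Mathlib

section
/- Let π*(x) = (1/2)(2π)^{−d/2}( e^{−‖x−μ₁‖²/2} + e^{−‖x−μ₂‖²/2} ) with μ₁ = (D,0,…,0) and μ₂ = −(D,0,…,0) for some D > 0. Consider the simulated tempering chain P* with x-proposal Q_i(x,·) = N(x, (2h/β_i)I_d) for some h > 0. Then for any s ∈ [0,1/2), Φ_s(P*) ≤ (4/(1−2s))·(2/(2+h))^{d/2}·exp( −β₁D²/(2+h) ). -/
open MeasureTheory
open scoped ENNReal RealInnerProductSpace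

noncomputable section

namespace ST

variable {X : Type*} [MeasurableSpace X]

/-- The probability flow `P(A, Aᶜ) = ∫_A P(x, Aᶜ) Π(dx)`. -/
def flow (Pi : Measure X) (P : X → Measure X) (A : Set X) : ℝ :=
  (∫⁻ x in A, P x Aᶜ ∂Pi).toReal

/-- The `s`-conductance `Φ_s(P)`. -/
def sCond (Pi : Measure X) (P : X → Measure X) (s : ℝ) : ℝ :=
  sInf { t : ℝ | ∃ A : Set X, MeasurableSet A ∧ s < (Pi A).toReal ∧ (Pi A).toReal ≤ 1 / 2 ∧
    t = flow Pi P A / ((Pi A).toReal - s) }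

/-- The Dirichlet form `E_P(g)`. -/
def dirichlet (Pi : Measure X) (P : X → Measure X) (g : X → ℝ) : ℝ :=
  (1 / 2) * ∫ x, (∫ y, (g y - g x) ^ 2 ∂(P x)) ∂Pi

/-- The variance `V_Π(g)`. -/
def variance (Pi : Measure X) (g : X → ℝ) : ℝ :=
  ∫ x, (g x - ∫ y, g y ∂Pi) ^ 2 ∂Pi

/-- The spectral gap `λ(P)`. -/
def gap (Pi : Measure X) (P : X → Measure X) : ℝ :=
  sInf { t : ℝ | ∃ g : X → ℝ, Measurable g ∧ 0 < variance Pi g ∧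
    t = dirichlet Pi P g / variance Pi g }

/-- Reversibility of the kernel `P` with respect to `Π`. -/
def Reversible (Pi : Measure X) (P : X → Measure X) : Prop :=
  ∀ A B : Set X, MeasurableSet A → MeasurableSet B →
    ∫⁻ x in A, P x B ∂Pi = ∫⁻ x in B, P x A ∂Pi

/-- `P` is a Markov kernel (each `P x` is a probability measure). -/
def IsMarkov (P : X → Measure X) : Prop := ∀ x, IsProbabilityMeasure (P x)

/-- Total variation distance between two measures. -/
def tvDist (μ ν : Measure X) : ℝ :=
  sSup { t : ℝ | ∃ A : Set X, MeasurableSet A ∧ t = |(μ A).toReal - (ν A).toReal| }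

/-- Metropolis–Hastings acceptance probability. -/
def mhAccept (pi : X → ℝ) (q : X → X → ℝ) (x y : X) : ℝ :=
  min 1 (pi y * q y x / (pi x * q x y))

/-- `P` is the Metropolis–Hastings kernel with target density `pi`,
proposal kernel `Q` having density `q`. -/
def IsMH (P : X → Measure X) (Q : X → Measure X) (pi : X → ℝ) (q : X → X → ℝ) : Prop :=
  ∀ x, P x =
    (Q x).withDensity (fun y => ENNReal.ofReal (mhAccept pi q x y)) +
      ENNReal.ofReal (1 - ∫ z, mhAccept pi q x z ∂(Q x)) • Measure.dirac x

/-- Dirichlet form of a finite-state chain. -/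
def finDirichlet {ι : Type*} [Fintype ι] (p : ι → ℝ) (M : ι → ι → ℝ) (g : ι → ℝ) : ℝ :=
  (1 / 2) * ∑ k, ∑ l, (g l - g k) ^ 2 * p k * M k l

/-- Variance of a function on a finite state space. -/
def finVariance {ι : Type*} [Fintype ι] (p : ι → ℝ) (g : ι → ℝ) : ℝ :=
  ∑ k, (g k - ∑ l, g l * p l) ^ 2 * p k

/-- Spectral gap of a finite-state chain. -/
def finGap {ι : Type*} [Fintype ι] (p : ι → ℝ) (M : ι → ι → ℝ) : ℝ :=
  sInf { t : ℝ | ∃ g : ι → ℝ, 0 < finVariance p g ∧ t = finDirichlet p M g / finVariance p g }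

/-- `ℝ^d` with the Euclidean norm. -/
abbrev E (d : ℕ) := EuclideanSpace ℝ (Fin d)

/-- `L`-smoothness of a function on `ℝ^d`. -/
def LSmooth {d : ℕ} (L : ℝ) (f : E d → ℝ) : Prop :=
  ∀ x y : E d, f y - f x - (inner ℝ (gradient f x) (y - x) : ℝ) ≤ L / 2 * ‖y - x‖ ^ 2

/-- `m`-strong convexity of a function on `ℝ^d`. -/
def StrongConvex {d : ℕ} (m : ℝ) (f : E d → ℝ) : Prop :=
  ∀ x y : E d, m / 2 * ‖y - x‖ ^ 2 ≤ f y - f x - (inner ℝ (gradient f x) (y - x) : ℝ)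

/-- Density of the isotropic Gaussian `N(m, σ² I_d)` on `ℝ^d`. -/
def gaussDens {d : ℕ} (m : E d) (σ2 : ℝ) (x : E d) : ℝ :=
  (2 * Real.pi * σ2) ^ (-(d : ℝ) / 2) * Real.exp (-‖x - m‖ ^ 2 / (2 * σ2))

/-- The isotropic Gaussian measure `N(m, σ² I_d)` on `ℝ^d`. -/
def gaussE {d : ℕ} (m : E d) (σ2 : ℝ) : Measure (E d) :=
  volume.withDensity fun x => ENNReal.ofReal (gaussDens m σ2 x)

/-- Reference measure (counting ⊗ Lebesgue) on `[T] × ℝ^d`. -/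
def base2 (T d : ℕ) : Measure (Fin T × E d) := Measure.count.prod volume

/-- Reference measure (counting ⊗ counting ⊗ Lebesgue) on `[T] × [K] × ℝ^d`. -/
def base3 (T K d : ℕ) : Measure (Fin T × Fin K × E d) :=
  Measure.count.prod (Measure.count.prod volume)

/-- Acceptance probability for an `x`-move of simulated tempering with joint target
density `ρ(i,x)` and proposal densities `qd i x y`. -/
def accMove {T d : ℕ} (ρ : Fin T × E d → ℝ) (qd : Fin T → E d → E d → ℝ)
    (i : Fin T) (x y : E d) : ℝ :=
  min 1 (ρ (i, y) * qd i y x / (ρ (i, x) * qd i x y))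

/-- Acceptance probability for a temperature move of simulated tempering. -/
def accTemp {T d : ℕ} (ρ : Fin T × E d → ℝ) (q : Fin T → Fin T → ℝ)
    (i i' : Fin T) (x : E d) : ℝ :=
  min 1 (ρ (i', x) * q i' i / (ρ (i, x) * q i i'))

/-- The Metropolis–Hastings simulated tempering kernel on `[T] × ℝ^d` with target density
`ρ(i,x)`: with probability `α` propose a temperature move `i → i'` drawn from `q(i,·)`
(keeping `x` fixed), with probability `1-α` propose `x' ∼ Q_i(x,·)` (keeping `i` fixed),
accepting with the Metropolis--Hastings probabilities. -/
def stKernel {T d : ℕ} (α : ℝ) (q : Fin T → Fin T → ℝ)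
    (Qi : Fin T → E d → Measure (E d)) (qd : Fin T → E d → E d → ℝ)
    (ρ : Fin T × E d → ℝ) : Fin T × E d → Measure (Fin T × E d) :=
  fun p =>
    ENNReal.ofReal (1 - α) •
        (((Qi p.1 p.2).withDensity fun y => ENNReal.ofReal (accMove ρ qd p.1 p.2 y)).map
          fun y => (p.1, y))
      + (∑ i' : Fin T, if i' = p.1 then 0 else
          ENNReal.ofReal (α * q p.1 i' * accTemp ρ q p.1 i' p.2) • Measure.dirac (i', p.2))
      + ENNReal.ofReal
          (1 - (1 - α) * (∫ y, accMove ρ qd p.1 p.2 y ∂(Qi p.1 p.2))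
            - α * ∑ i' : Fin T, if i' = p.1 then 0 else q p.1 i' * accTemp ρ q p.1 i' p.2) •
          Measure.dirac p

/-- The second auxiliary Metropolis–Hastings chain on `[T] × [K] × ℝ^d` with target joint
density `pj(i,j,x)`: with probability `1/2` resample `j` from its conditional distribution
given `(i,x)`, with probability `1/2` apply the simulated tempering proposal to `(i,x)`
keeping `j` fixed, accepting with the Metropolis–Hastings probabilities. -/
def jointKernel {T K d : ℕ} (α : ℝ) (q : Fin T → Fin T → ℝ)
    (Qi : Fin T → E d → Measure (E d)) (qd : Fin T → E d → E d → ℝ)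
    (pj : Fin T → Fin K → E d → ℝ) :
    Fin T × Fin K × E d → Measure (Fin T × Fin K × E d) :=
  fun p =>
    (2 : ℝ≥0∞)⁻¹ • (∑ j' : Fin K,
        ENNReal.ofReal (pj p.1 j' p.2.2 / ∑ j'' : Fin K, pj p.1 j'' p.2.2) •
          Measure.dirac (p.1, j', p.2.2))
      + ENNReal.ofReal ((1 - α) / 2) •
          (((Qi p.1 p.2.2).withDensity fun y => ENNReal.ofReal
              (min 1 (pj p.1 p.2.1 y * qd p.1 y p.2.2 /
                (pj p.1 p.2.1 p.2.2 * qd p.1 p.2.2 y)))).map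
            fun y => (p.1, p.2.1, y))
      + (∑ i' : Fin T, if i' = p.1 then 0 else
          ENNReal.ofReal (α / 2 * q p.1 i' *
              min 1 (pj i' p.2.1 p.2.2 * q i' p.1 / (pj p.1 p.2.1 p.2.2 * q p.1 i'))) •
            Measure.dirac (i', p.2.1, p.2.2))
      + ENNReal.ofReal
          ((1 - α) / 2 * (1 - ∫ y, min 1 (pj p.1 p.2.1 y * qd p.1 y p.2.2 /
              (pj p.1 p.2.1 p.2.2 * qd p.1 p.2.2 y)) ∂(Qi p.1 p.2.2))
            + α / 2 * (1 - ∑ i' : Fin T, if i' = p.1 then 0 else q p.1 i' *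
                min 1 (pj i' p.2.1 p.2.2 * q i' p.1 / (pj p.1 p.2.1 p.2.2 * q p.1 i')))) •
          Measure.dirac p

/-- `t`-step distribution of the chain with kernel `P` started at `ν`. -/
def iterDist {Y : Type*} [MeasurableSpace Y] (P : Y → Measure Y) (ν : Measure Y) (t : ℕ) :
    Measure Y :=
  (fun μ => μ.bind P)^[t] ν

/-- The lazy version of a Markov kernel. -/
def lazy {Y : Type*} [MeasurableSpace Y] (P : Y → Measure Y) : Y → Measure Y :=
  fun x => (2 : ℝ≥0∞)⁻¹ • P x + (2 : ℝ≥0∞)⁻¹ • Measure.dirac x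

/-- KL divergence between two densities w.r.t. a reference measure. -/
def klDens {Y : Type*} [MeasurableSpace Y] (μ : Measure Y) (p q : Y → ℝ) : ℝ :=
  ∫ x, p x * Real.log (p x / q x) ∂μ

end ST

/-!
The set `A = [T] × {x | ⟪x, μ₁⟫ < 0}` witnesses the bound. Every tempered marginal is even, so
`Π*(A) = 1/2`, and temperature moves never leave `A`. For an `x`-move with a symmetric proposal,
`π(i,x) · min(1, π(i,y)/π(i,x)) = min(π(i,x), π(i,y)) ≤ √(π(i,x) π(i,y))`, and for `x ∈ A`,
`y ∉ A` each factor is dominated by the Gaussian bump of the nearer mode (`-μ₁` for `x`, `μ₁`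
for `y`). The flow out of `A` is therefore at most a Gaussian double integral, computed by
completing squares, while `Z_i` is at least `2^{-β_i}` times the integral of a single bump. The
`i`-th term of the flow is thus at most `2 r_i (2/(2+h))^{d/2} exp(-β_i D²/(2+h))`, and summing
with `β₁ ≤ β_i` and `∑ r_i = 1` bounds the flow by `2 (2/(2+h))^{d/2} exp(-β₁ D²/(2+h))`.
-/

namespace ST

open Real

lemma sCond_le_flow_div {X : Type*} [MeasurableSpace X] {Pi : Measure X} {P : X → Measure X}
    {s : ℝ} {A : Set X} (hA : MeasurableSet A) (hs : s < (Pi A).toReal)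
    (hA_le : (Pi A).toReal ≤ 1 / 2) :
    sCond Pi P s ≤ flow Pi P A / ((Pi A).toReal - s) :=
  csInf_le ⟨0, by
    rintro t ⟨B, -, hB, -, rfl⟩
    exact div_nonneg ENNReal.toReal_nonneg (by linarith)⟩ ⟨A, hA, hs, hA_le, rfl⟩

lemma lintegral_count_prod {ι Y : Type*} [Fintype ι] [MeasurableSpace ι]
    [MeasurableSingletonClass ι] [MeasurableSpace Y] (μ : Measure Y) [SFinite μ]
    (f : ι × Y → ℝ≥0∞) :
    ∫⁻ p, f p ∂Measure.count.prod μ = ∑ i, ∫⁻ y, f (i, y) ∂μ := by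
  rw [show (Measure.count : Measure ι) = Measure.sum Measure.dirac from rfl,
    Measure.prod_sum_left, lintegral_sum_measure, tsum_fintype]
  simp only [Measure.dirac_prod, (measurableEmbedding_prodMk_left _).lintegral_map]

section InnerProductSpace

variable {V : Type*} [NormedAddCommGroup V] [InnerProductSpace ℝ V]

lemma exp_mul_exp_eq_exp_mul_exp {a b : ℝ} (ha : 0 < a) (hb : 0 < b) (u v x : V) :
    exp (-a * ‖x - u‖ ^ 2) * exp (-b * ‖x - v‖ ^ 2) =
      exp (-(a * b / (a + b)) * ‖u - v‖ ^ 2) *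
        exp (-(a + b) * ‖x - (a + b)⁻¹ • (a • u + b • v)‖ ^ 2) := by
  have hab : a + b ≠ 0 := by positivity
  rw [← exp_add, ← exp_add]
  congr 1
  simp only [norm_sub_sq_real, norm_smul, mul_pow, norm_add_sq_real, inner_smul_right,
    inner_add_right, real_inner_smul_left, Real.norm_eq_abs, sq_abs]
  field_simp
  ring

lemma measurableSet_inner_neg [MeasurableSpace V] [OpensMeasurableSpace V] (μ : V) :
    MeasurableSet {x : V | ⟪x, μ⟫ < 0} :=
  (isOpen_lt (by fun_prop) continuous_const).measurableSet

variable [FiniteDimensional ℝ V] [MeasurableSpace V] [BorelSpace V]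

lemma integral_exp_neg_mul_sq_norm_sub {a : ℝ} (ha : 0 < a) (m : V) :
    ∫ x, exp (-a * ‖x - m‖ ^ 2) = (π / a) ^ ((Module.finrank ℝ V : ℝ) / 2) := by
  rw [integral_sub_right_eq_self (fun x => exp (-a * ‖x‖ ^ 2)) m,
    GaussianFourier.integral_rexp_neg_mul_sq_norm ha]

lemma integrable_exp_neg_mul_sq_norm_sub {a : ℝ} (ha : 0 < a) (m : V) :
    Integrable fun x => exp (-a * ‖x - m‖ ^ 2) :=
  .of_integral_ne_zero <| by
    rw [integral_exp_neg_mul_sq_norm_sub ha]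
    exact (rpow_pos_of_pos (div_pos pi_pos ha) _).ne'

lemma lintegral_exp_mul_exp {a b : ℝ} (ha : 0 < a) (hb : 0 < b) (u v : V) :
    ∫⁻ x, ENNReal.ofReal (exp (-a * ‖x - u‖ ^ 2) * exp (-b * ‖x - v‖ ^ 2)) =
      ENNReal.ofReal ((π / (a + b)) ^ ((Module.finrank ℝ V : ℝ) / 2) *
        exp (-(a * b / (a + b)) * ‖u - v‖ ^ 2)) := by
  simp only [exp_mul_exp_eq_exp_mul_exp ha hb u v]
  rw [← ofReal_integral_eq_lintegral_ofReal
      ((integrable_exp_neg_mul_sq_norm_sub (add_pos ha hb) _).const_mul _)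
      (ae_of_all _ fun x => by positivity),
    integral_const_mul, integral_exp_neg_mul_sq_norm_sub (add_pos ha hb), mul_comm]

lemma lintegral_inner_neg_eq_half {μ : V} (hμ : μ ≠ 0) {f : V → ℝ≥0∞}
    (hf_neg : ∀ x, f (-x) = f x) :
    ∫⁻ x in {x | ⟪x, μ⟫ < 0}, f x = (∫⁻ x, f x) / 2 := by
  have hB := measurableSet_inner_neg μ
  have hreflect : ∫⁻ x in {x | ⟪x, μ⟫ < 0}, f x = ∫⁻ x in {x | 0 < ⟪x, μ⟫}, f x := by
    rw [← lintegral_indicator hB,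
      ← lintegral_indicator (isOpen_lt continuous_const (by fun_prop)).measurableSet,
      ← lintegral_neg_eq_self]
    congr 1 with x
    simp [Set.indicator, hf_neg, inner_neg_left]
  have hnull : volume {x : V | ⟪x, μ⟫ = 0} = 0 := by
    have hperp : {x : V | ⟪x, μ⟫ = 0} = ((ℝ ∙ μ)ᗮ : Submodule ℝ V) := by
      ext x
      simp [Submodule.mem_orthogonal_singleton_iff_inner_right, real_inner_comm]
    rw [hperp]
    refine Measure.addHaar_submodule _ _ ?_
    rwa [Ne, Submodule.orthogonal_eq_top_iff, Submodule.span_singleton_eq_bot]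
  have hcompl : ({x : V | ⟪x, μ⟫ < 0}ᶜ : Set V) =ᵐ[volume] {x | 0 < ⟪x, μ⟫} := by
    refine ae_eq_set.2 ⟨measure_mono_null (fun x hx => ?_) hnull,
      measure_mono_null (fun x hx => ?_) hnull⟩
    · simp only [Set.mem_sdiff, Set.mem_compl_iff, Set.mem_ofPred_eq, not_lt] at hx ⊢
      exact le_antisymm hx.2 hx.1
    · simp only [Set.mem_sdiff, Set.mem_compl_iff, Set.mem_ofPred_eq, not_lt] at hx ⊢
      linarith [hx.1, hx.2]
  conv_rhs => rw [← lintegral_add_compl f hB, setLIntegral_congr hcompl, ← hreflect]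
  rw [← two_mul, mul_div_assoc, ENNReal.mul_div_cancel two_ne_zero ENNReal.ofNat_ne_top]

end InnerProductSpace

section GaussianKernel

variable {d : ℕ}

lemma continuous_gaussDens (m : E d) (σ2 : ℝ) : Continuous (gaussDens m σ2) := by
  unfold gaussDens
  fun_prop

lemma lintegral_gaussE (m : E d) (σ2 : ℝ) (f : E d → ℝ≥0∞) :
    ∫⁻ y, f y ∂gaussE m σ2 = ∫⁻ y, ENNReal.ofReal (gaussDens m σ2 y) * f y :=
  lintegral_withDensity_eq_lintegral_mul_non_measurable _
    (continuous_gaussDens m σ2).measurable.ennreal_ofReal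
    (ae_of_all _ fun _ => ENNReal.ofReal_lt_top) f

lemma gaussDens_pos {σ2 : ℝ} (hσ : 0 < σ2) (m x : E d) : 0 < gaussDens m σ2 x := by
  unfold gaussDens
  positivity

lemma gaussDens_comm (σ2 : ℝ) (x y : E d) : gaussDens x σ2 y = gaussDens y σ2 x := by
  rw [gaussDens, gaussDens, norm_sub_rev]

lemma lintegral_exp_gaussE {σ2 b : ℝ} (hσ : 0 < σ2) (hb : 0 < b) (m v : E d) :
    ∫⁻ y, ENNReal.ofReal (exp (-b * ‖y - v‖ ^ 2)) ∂gaussE m σ2 =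
      ENNReal.ofReal (((1 + 2 * b * σ2)⁻¹) ^ ((d : ℝ) / 2) *
        exp (-(b / (1 + 2 * b * σ2)) * ‖m - v‖ ^ 2)) := by
  have ha : 0 < (2 * σ2)⁻¹ := by positivity
  have hdens : ∀ y, gaussDens m σ2 y * exp (-b * ‖y - v‖ ^ 2) =
      (2 * π * σ2) ^ (-(d : ℝ) / 2) *
        (exp (-(2 * σ2)⁻¹ * ‖y - m‖ ^ 2) * exp (-b * ‖y - v‖ ^ 2)) := fun y => by
    rw [gaussDens, show -‖y - m‖ ^ 2 / (2 * σ2) = -(2 * σ2)⁻¹ * ‖y - m‖ ^ 2 by ring, mul_assoc]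
  rw [lintegral_gaussE]
  simp_rw [← ENNReal.ofReal_mul (gaussDens_pos hσ _ _).le, hdens,
    ENNReal.ofReal_mul (by positivity : (0 : ℝ) ≤ (2 * π * σ2) ^ (-(d : ℝ) / 2))]
  rw [lintegral_const_mul' _ _ ENNReal.ofReal_ne_top, lintegral_exp_mul_exp ha hb,
    finrank_euclideanSpace_fin, ← ENNReal.ofReal_mul (by positivity)]
  congr 1
  rw [neg_div, rpow_neg (by positivity), ← inv_rpow (by positivity), ← mul_assoc,
    ← mul_rpow (by positivity) (by positivity)]
  congr 2 <;> field_simp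

lemma lintegral_lintegral_exp_gaussE {β h : ℝ} (hβ : 0 < β) (hh : 0 < h) (u v : E d) :
    ∫⁻ x, ∫⁻ y, ENNReal.ofReal (exp (-(β / 4) * ‖x - u‖ ^ 2) * exp (-(β / 4) * ‖y - v‖ ^ 2))
        ∂gaussE x (2 * h / β) =
      ENNReal.ofReal ((4 * π / (β * (2 + h))) ^ ((d : ℝ) / 2) *
        exp (-(β / (4 * (2 + h))) * ‖u - v‖ ^ 2)) := by
  have hσ : 1 + 2 * (β / 4) * (2 * h / β) = 1 + h := by field_simp; ring
  have hinner : ∀ x : E d, ∫⁻ y, ENNReal.ofReal (exp (-(β / 4) * ‖x - u‖ ^ 2) *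
        exp (-(β / 4) * ‖y - v‖ ^ 2)) ∂gaussE x (2 * h / β) =
      ENNReal.ofReal (((1 + h)⁻¹) ^ ((d : ℝ) / 2)) * ENNReal.ofReal
        (exp (-(β / 4) * ‖x - u‖ ^ 2) * exp (-(β / (4 * (1 + h))) * ‖x - v‖ ^ 2)) := fun x => by
    simp_rw [ENNReal.ofReal_mul (exp_pos _).le]
    rw [lintegral_const_mul' _ _ ENNReal.ofReal_ne_top,
      lintegral_exp_gaussE (by positivity) (by positivity), hσ,
      ENNReal.ofReal_mul (by positivity), div_div]
    ring
  simp_rw [hinner]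
  rw [lintegral_const_mul' _ _ ENNReal.ofReal_ne_top,
    lintegral_exp_mul_exp (by positivity) (by positivity), finrank_euclideanSpace_fin,
    ← ENNReal.ofReal_mul (by positivity), ← mul_assoc, ← mul_rpow (by positivity) (by positivity)]
  congr 3 <;> field_simp <;> ring

end GaussianKernel

section Mixture

variable {V : Type*} [NormedAddCommGroup V]

/-- The normalising constant `c = (2π)^{-d/2}` is kept as a parameter: it cancels against
`∫ mixture c μ x ^ β`. -/
def mixture (c : ℝ) (μ x : V) : ℝ :=
  1 / 2 * c * (exp (-‖x - μ‖ ^ 2 / 2) + exp (-‖x + μ‖ ^ 2 / 2))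

variable {c : ℝ} {μ : V}

lemma mixture_nonneg (hc : 0 ≤ c) (x : V) : 0 ≤ mixture c μ x := by
  unfold mixture
  positivity

lemma continuous_mixture : Continuous (mixture c μ) := by
  unfold mixture
  fun_prop

lemma mixture_neg (x : V) : mixture c μ (-x) = mixture c μ x := by
  rw [mixture, mixture, show -x - μ = -(x + μ) by abel, show -x + μ = -(x - μ) by abel,
    norm_neg, norm_neg, add_comm]

lemma half_mul_exp_le_mixture (hc : 0 ≤ c) (x : V) :
    1 / 2 * c * exp (-‖x - μ‖ ^ 2 / 2) ≤ mixture c μ x := by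
  unfold mixture
  have := exp_pos (-‖x + μ‖ ^ 2 / 2)
  nlinarith

lemma mul_exp_rpow (hc : 0 ≤ c) (t β : ℝ) :
    (c * exp (-t / 2)) ^ β = c ^ β * exp (-(β / 2) * t) := by
  rw [mul_rpow hc (exp_pos _).le, ← exp_mul]
  ring_nf

variable [InnerProductSpace ℝ V]

lemma mixture_le_of_inner_nonpos (hc : 0 ≤ c) {x : V} (hx : ⟪x, μ⟫ ≤ 0) :
    mixture c μ x ≤ c * exp (-‖x + μ‖ ^ 2 / 2) := by
  have hexp : exp (-‖x - μ‖ ^ 2 / 2) ≤ exp (-‖x + μ‖ ^ 2 / 2) := by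
    rw [exp_le_exp, norm_sub_sq_real, norm_add_sq_real]
    linarith
  unfold mixture
  nlinarith

lemma mixture_le_of_inner_nonneg (hc : 0 ≤ c) {x : V} (hx : 0 ≤ ⟪x, μ⟫) :
    mixture c μ x ≤ c * exp (-‖x - μ‖ ^ 2 / 2) := by
  have := mixture_le_of_inner_nonpos hc (μ := μ) (x := -x) (by rwa [inner_neg_left, neg_nonpos])
  rwa [mixture_neg, show -x + μ = -(x - μ) by abel, norm_neg] at this

lemma mixture_rpow_le_of_inner_nonpos (hc : 0 ≤ c) {β : ℝ} (hβ : 0 ≤ β) {x : V}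
    (hx : ⟪x, μ⟫ ≤ 0) : mixture c μ x ^ β ≤ c ^ β * exp (-(β / 2) * ‖x + μ‖ ^ 2) :=
  (rpow_le_rpow (mixture_nonneg hc x) (mixture_le_of_inner_nonpos hc hx) hβ).trans_eq
    (mul_exp_rpow hc _ _)

lemma mixture_rpow_le_of_inner_nonneg (hc : 0 ≤ c) {β : ℝ} (hβ : 0 ≤ β) {x : V}
    (hx : 0 ≤ ⟪x, μ⟫) : mixture c μ x ^ β ≤ c ^ β * exp (-(β / 2) * ‖x - μ‖ ^ 2) :=
  (rpow_le_rpow (mixture_nonneg hc x) (mixture_le_of_inner_nonneg hc hx) hβ).trans_eq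
    (mul_exp_rpow hc _ _)

variable [FiniteDimensional ℝ V] [MeasurableSpace V] [BorelSpace V]

lemma integrable_mixture_rpow (hc : 0 ≤ c) {β : ℝ} (hβ : 0 < β) :
    Integrable fun x => mixture c μ x ^ β := by
  have hplus := integrable_exp_neg_mul_sq_norm_sub (half_pos hβ) (-μ)
  simp only [sub_neg_eq_add] at hplus
  refine ((hplus.const_mul (c ^ β)).add
    ((integrable_exp_neg_mul_sq_norm_sub (half_pos hβ) μ).const_mul (c ^ β))).mono'
    (continuous_mixture.rpow_const fun _ => Or.inr hβ.le).aestronglyMeasurable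
    (ae_of_all _ fun x => ?_)
  rw [norm_of_nonneg (rpow_nonneg (mixture_nonneg hc x) _), Pi.add_apply]
  have h₁ : 0 ≤ c ^ β * exp (-(β / 2) * ‖x + μ‖ ^ 2) := by positivity
  have h₂ : 0 ≤ c ^ β * exp (-(β / 2) * ‖x - μ‖ ^ 2) := by positivity
  rcases le_total ⟪x, μ⟫ 0 with hx | hx
  · linarith [mixture_rpow_le_of_inner_nonpos hc hβ.le hx]
  · linarith [mixture_rpow_le_of_inner_nonneg hc hβ.le hx]

lemma le_integral_mixture_rpow (hc : 0 ≤ c) {β : ℝ} (hβ : 0 < β) :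
    (1 / 2 * c) ^ β * (π / (β / 2)) ^ ((Module.finrank ℝ V : ℝ) / 2) ≤
      ∫ x, mixture c μ x ^ β :=
  calc (1 / 2 * c) ^ β * (π / (β / 2)) ^ ((Module.finrank ℝ V : ℝ) / 2)
      = ∫ x, (1 / 2 * c) ^ β * exp (-(β / 2) * ‖x - μ‖ ^ 2) := by
        rw [integral_const_mul, integral_exp_neg_mul_sq_norm_sub (half_pos hβ)]
    _ ≤ ∫ x, mixture c μ x ^ β :=
        integral_mono ((integrable_exp_neg_mul_sq_norm_sub (half_pos hβ) μ).const_mul _)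
          (integrable_mixture_rpow hc hβ) fun x =>
          (mul_exp_rpow (by positivity) _ _).symm.trans_le
            (rpow_le_rpow (by positivity) (half_mul_exp_le_mixture hc x) hβ.le)

lemma lintegral_inner_neg_mixture_rpow (hμ : μ ≠ 0) (hc : 0 ≤ c) {β : ℝ} (hβ : 0 < β) :
    ∫⁻ x in {x | ⟪x, μ⟫ < 0}, ENNReal.ofReal (mixture c μ x ^ β) =
      ENNReal.ofReal (∫ x, mixture c μ x ^ β) / 2 := by
  rw [lintegral_inner_neg_eq_half hμ fun x => by rw [mixture_neg],
    ofReal_integral_eq_lintegral_ofReal (integrable_mixture_rpow hc hβ)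
      (ae_of_all _ fun x => rpow_nonneg (mixture_nonneg hc x) _)]

end Mixture

section TemperedMixture

variable {ι V : Type*} [NormedAddCommGroup V] [InnerProductSpace ℝ V] [FiniteDimensional ℝ V]
  [MeasurableSpace V] [BorelSpace V] {c : ℝ} {μ : V} {β r : ι → ℝ}

def temperedDensity (c : ℝ) (μ : V) (β r : ι → ℝ) (p : ι × V) : ℝ :=
  r p.1 * mixture c μ p.2 ^ β p.1 / ∫ x, mixture c μ x ^ β p.1

lemma temperedDensity_nonneg (hc : 0 ≤ c) {p : ι × V} (hr : 0 ≤ r p.1) :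
    0 ≤ temperedDensity c μ β r p :=
  div_nonneg (mul_nonneg hr (rpow_nonneg (mixture_nonneg hc _) _))
    (integral_nonneg fun _ => rpow_nonneg (mixture_nonneg hc _) _)

lemma measurable_temperedDensity [MeasurableSpace ι] [Countable ι] [MeasurableSingletonClass ι] :
    Measurable (temperedDensity c μ β r) :=
  measurable_from_prod_countable_right fun _ => by
    dsimp only [temperedDensity]
    exact ((continuous_mixture.measurable.pow_const _).const_mul _).div_const _

lemma integral_mixture_rpow_pos (hc : 0 < c) {β : ℝ} (hβ : 0 < β) :
    0 < ∫ x, mixture c μ x ^ β :=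
  lt_of_lt_of_le (by positivity) (le_integral_mixture_rpow hc.le hβ)

lemma sqrt_temperedDensity_mul_le (hc : 0 ≤ c) {i : ι} (hr : 0 ≤ r i) (hβ : 0 ≤ β i) {x y : V}
    (hx : ⟪x, μ⟫ ≤ 0) (hy : 0 ≤ ⟪y, μ⟫) :
    √(temperedDensity c μ β r (i, x) * temperedDensity c μ β r (i, y)) ≤
      r i / (∫ z, mixture c μ z ^ β i) * c ^ β i *
        (exp (-(β i / 4) * ‖x + μ‖ ^ 2) * exp (-(β i / 4) * ‖y - μ‖ ^ 2)) := by
  have hK : 0 ≤ r i / ∫ z, mixture c μ z ^ β i :=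
    div_nonneg hr (integral_nonneg fun _ => rpow_nonneg (mixture_nonneg hc _) _)
  have hsq : ∀ t, exp (-(β i / 2) * t) = exp (-(β i / 4) * t) ^ 2 := fun t => by
    rw [sq, ← exp_add]
    ring_nf
  have hρx : temperedDensity c μ β r (i, x) ≤
      r i / (∫ z, mixture c μ z ^ β i) * (c ^ β i * exp (-(β i / 2) * ‖x + μ‖ ^ 2)) := by
    rw [temperedDensity, mul_div_right_comm]
    exact mul_le_mul_of_nonneg_left (mixture_rpow_le_of_inner_nonpos hc hβ hx) hK
  have hρy : temperedDensity c μ β r (i, y) ≤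
      r i / (∫ z, mixture c μ z ^ β i) * (c ^ β i * exp (-(β i / 2) * ‖y - μ‖ ^ 2)) := by
    rw [temperedDensity, mul_div_right_comm]
    exact mul_le_mul_of_nonneg_left (mixture_rpow_le_of_inner_nonneg hc hβ hy) hK
  refine sqrt_le_iff.2 ⟨by positivity, ?_⟩
  calc temperedDensity c μ β r (i, x) * temperedDensity c μ β r (i, y)
      ≤ r i / (∫ z, mixture c μ z ^ β i) * (c ^ β i * exp (-(β i / 2) * ‖x + μ‖ ^ 2)) *
          (r i / (∫ z, mixture c μ z ^ β i) * (c ^ β i * exp (-(β i / 2) * ‖y - μ‖ ^ 2))) :=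
        mul_le_mul hρx hρy (temperedDensity_nonneg hc hr) (by positivity)
    _ = _ := by rw [hsq, hsq]; ring

end TemperedMixture

section SimulatedTempering

variable {T d : ℕ}

lemma setLIntegral_preimage_snd_withDensity {ρ : Fin T × E d → ℝ}
    (hρ : Measurable fun p => ENNReal.ofReal (ρ p)) {B : Set (E d)} (hB : MeasurableSet B)
    (g : Fin T × E d → ℝ≥0∞) :
    ∫⁻ p in Prod.snd ⁻¹' B, g p ∂(base2 T d).withDensity (fun p => ENNReal.ofReal (ρ p)) =
      ∑ i, ∫⁻ x in B, ENNReal.ofReal (ρ (i, x)) * g (i, x) := by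
  rw [restrict_withDensity (measurable_snd hB),
    lintegral_withDensity_eq_lintegral_mul_non_measurable _ hρ
      (ae_of_all _ fun _ => ENNReal.ofReal_lt_top),
    base2, ← Set.univ_prod, ← Measure.prod_restrict, Measure.restrict_univ, lintegral_count_prod]
  rfl

lemma stKernel_apply_compl_preimage_snd (α : ℝ) (q : Fin T → Fin T → ℝ)
    (Qi : Fin T → E d → Measure (E d)) (qd : Fin T → E d → E d → ℝ) (ρ : Fin T × E d → ℝ)
    {B : Set (E d)} (hB : MeasurableSet B) (i : Fin T) {x : E d} (hx : x ∈ B) :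
    stKernel α q Qi qd ρ (i, x) (Prod.snd ⁻¹' B)ᶜ =
      ENNReal.ofReal (1 - α) * ∫⁻ y in Bᶜ, ENNReal.ofReal (accMove ρ qd i x y) ∂Qi i x := by
  have hA : MeasurableSet (Prod.snd ⁻¹' B : Set (Fin T × E d))ᶜ := (measurable_snd hB).compl
  have hdirac : ∀ i', Measure.dirac (i', x) (Prod.snd ⁻¹' B)ᶜ = 0 := fun i' => by
    rw [Measure.dirac_apply' _ hA, Set.indicator_of_notMem (by simpa using hx)]
  have htemp : ∀ i' (a : ℝ≥0∞),
      (if i' = i then 0 else a • Measure.dirac (i', x)) (Prod.snd ⁻¹' B)ᶜ = 0 := fun i' a => by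
    split_ifs <;> simp [hdirac]
  simp only [stKernel, Measure.add_apply, Measure.smul_apply, Measure.finsetSum_apply, htemp,
    hdirac, Finset.sum_const_zero, smul_eq_mul, mul_zero, add_zero]
  rw [Measure.map_apply measurable_prodMk_left hA,
    show Prod.mk i ⁻¹' (Prod.snd ⁻¹' B)ᶜ = Bᶜ from rfl, withDensity_apply _ hB.compl]

lemma mul_accMove_le_sqrt {ρ : Fin T × E d → ℝ} {qd : Fin T → E d → E d → ℝ} {i : Fin T}
    {x y : E d} (hq_symm : qd i y x = qd i x y) (hq_ne : qd i x y ≠ 0) (hρx : 0 ≤ ρ (i, x))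
    (hρy : 0 ≤ ρ (i, y)) :
    ρ (i, x) * accMove ρ qd i x y ≤ √(ρ (i, x) * ρ (i, y)) := by
  rw [accMove, hq_symm, mul_div_mul_right _ _ hq_ne]
  rcases hρx.eq_or_lt with h | h
  · rw [← h]
    simp
  rw [mul_min_of_nonneg _ _ h.le, mul_one, mul_div_cancel₀ _ h.ne',
    le_sqrt (le_min h.le hρy) (mul_nonneg h.le hρy), sq]
  exact mul_le_mul (min_le_left _ _) (min_le_right _ _) (le_min h.le hρy) h.le

lemma setLIntegral_stKernel_compl_le {α : ℝ} {q : Fin T → Fin T → ℝ}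
    {Qi : Fin T → E d → Measure (E d)} {qd : Fin T → E d → E d → ℝ} {ρ : Fin T × E d → ℝ}
    (hρ : Measurable fun p => ENNReal.ofReal (ρ p)) (hρ_nonneg : ∀ p, 0 ≤ ρ p)
    (hq_symm : ∀ i x y, qd i y x = qd i x y) (hq_ne : ∀ i x y, qd i x y ≠ 0)
    {B : Set (E d)} (hB : MeasurableSet B) :
    ∫⁻ p in Prod.snd ⁻¹' B, stKernel α q Qi qd ρ p (Prod.snd ⁻¹' B)ᶜ
        ∂(base2 T d).withDensity (fun p => ENNReal.ofReal (ρ p)) ≤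
      ENNReal.ofReal (1 - α) *
        ∑ i, ∫⁻ x in B, ∫⁻ y in Bᶜ, ENNReal.ofReal √(ρ (i, x) * ρ (i, y)) ∂Qi i x := by
  rw [setLIntegral_preimage_snd_withDensity hρ hB, Finset.mul_sum]
  refine Finset.sum_le_sum fun i _ => ?_
  rw [← lintegral_const_mul' _ _ ENNReal.ofReal_ne_top]
  refine setLIntegral_mono' hB fun x hx => ?_
  rw [stKernel_apply_compl_preimage_snd α q Qi qd ρ hB i hx, mul_left_comm,
    ← lintegral_const_mul' _ _ ENNReal.ofReal_ne_top]
  gcongr with y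
  rw [← ENNReal.ofReal_mul (hρ_nonneg _)]
  exact ENNReal.ofReal_le_ofReal
    (mul_accMove_le_sqrt (hq_symm i x y) (hq_ne i x y) (hρ_nonneg _) (hρ_nonneg _))

end SimulatedTempering

section TemperedGaussianMixture

variable {T d : ℕ} {c : ℝ} {μ : E d} {β r : Fin T → ℝ}

lemma withDensity_temperedDensity_halfspace (hμ : μ ≠ 0) (hc : 0 < c) (hβ : ∀ i, 0 < β i)
    (hr : ∀ i, 0 ≤ r i) (hr_sum : ∑ i, r i = 1) :
    (base2 T d).withDensity (fun p => ENNReal.ofReal (temperedDensity c μ β r p))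
      (Prod.snd ⁻¹' {x | ⟪x, μ⟫ < 0}) = 2⁻¹ := by
  rw [← setLIntegral_one, setLIntegral_preimage_snd_withDensity
    measurable_temperedDensity.ennreal_ofReal (measurableSet_inner_neg μ)]
  have hterm : ∀ i, ∫⁻ x in {x | ⟪x, μ⟫ < 0}, ENNReal.ofReal (temperedDensity c μ β r (i, x)) * 1 =
      ENNReal.ofReal (r i) / 2 := fun i => by
    have hZ := integral_mixture_rpow_pos hc (hβ i) (μ := μ)
    simp_rw [mul_one, temperedDensity, mul_div_right_comm,
      ENNReal.ofReal_mul (div_nonneg (hr i) hZ.le)]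
    rw [lintegral_const_mul' _ _ ENNReal.ofReal_ne_top,
      lintegral_inner_neg_mixture_rpow hμ hc.le (hβ i), ← mul_div_assoc,
      ← ENNReal.ofReal_mul (div_nonneg (hr i) hZ.le), div_mul_cancel₀ _ hZ.ne']
  simp_rw [hterm, div_eq_mul_inv, ← Finset.sum_mul,
    ← ENNReal.ofReal_sum_of_nonneg fun i _ => hr i, hr_sum, ENNReal.ofReal_one, one_mul]

lemma lintegral_halfspace_sqrt_temperedDensity_le (hc : 0 ≤ c) {i : Fin T} (hr : 0 ≤ r i)
    (hβ : 0 < β i) {h : ℝ} (hh : 0 < h) :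
    ∫⁻ x in {x | ⟪x, μ⟫ < 0}, ∫⁻ y in {x | ⟪x, μ⟫ < 0}ᶜ,
        ENNReal.ofReal √(temperedDensity c μ β r (i, x) * temperedDensity c μ β r (i, y))
        ∂gaussE x (2 * h / β i) ≤
      ENNReal.ofReal (r i / (∫ z, mixture c μ z ^ β i) * c ^ β i *
        ((4 * π / (β i * (2 + h))) ^ ((d : ℝ) / 2) * exp (-(β i * ‖μ‖ ^ 2 / (2 + h))))) := by
  have hB := measurableSet_inner_neg μ
  have hK : 0 ≤ r i / (∫ z, mixture c μ z ^ β i) * c ^ β i :=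
    mul_nonneg (div_nonneg hr (integral_nonneg fun _ => rpow_nonneg (mixture_nonneg hc _) _))
      (rpow_nonneg hc _)
  calc _ ≤ ∫⁻ x, ∫⁻ y, ENNReal.ofReal (r i / (∫ z, mixture c μ z ^ β i) * c ^ β i *
          (exp (-(β i / 4) * ‖x - -μ‖ ^ 2) * exp (-(β i / 4) * ‖y - μ‖ ^ 2)))
          ∂gaussE x (2 * h / β i) := by
        refine (setLIntegral_mono' hB fun x hx => ?_).trans (setLIntegral_le_lintegral _ _)
        refine (setLIntegral_mono' hB.compl fun y hy => ?_).trans (setLIntegral_le_lintegral _ _)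
        rw [sub_neg_eq_add]
        exact ENNReal.ofReal_le_ofReal
          (sqrt_temperedDensity_mul_le hc hr hβ.le (le_of_lt hx) (not_lt.1 hy))
    _ = _ := by
        simp_rw [ENNReal.ofReal_mul hK, lintegral_const_mul' _ _ ENNReal.ofReal_ne_top]
        rw [lintegral_lintegral_exp_gaussE hβ hh, ← neg_add', norm_neg, ← two_smul ℝ μ,
          norm_smul, Real.norm_two]
        congr 4
        field_simp
        ring

lemma rpow_mul_div_integral_mixture_rpow_le (hc : 0 < c) {b h : ℝ} (hb : 0 < b) (hb1 : b ≤ 1)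
    (hh : 0 < h) :
    c ^ b * (4 * π / (b * (2 + h))) ^ ((d : ℝ) / 2) / ∫ x, mixture c μ x ^ b ≤
      2 * (2 / (2 + h)) ^ ((d : ℝ) / 2) := by
  have hZ := le_integral_mixture_rpow hc.le hb (μ := μ)
  rw [finrank_euclideanSpace_fin] at hZ
  have htwo : (2 : ℝ) ^ b ≤ 2 := by
    simpa using rpow_le_rpow_of_exponent_le one_le_two hb1
  have hc2 : c = 2 * (1 / 2 * c) := by ring
  have hbase : 4 * π / (b * (2 + h)) = 2 / (2 + h) * (π / (b / 2)) := by
    field_simp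
    ring
  rw [div_le_iff₀ (integral_mixture_rpow_pos hc hb)]
  calc c ^ b * (4 * π / (b * (2 + h))) ^ ((d : ℝ) / 2)
      = (2 * (1 / 2 * c)) ^ b * (2 / (2 + h) * (π / (b / 2))) ^ ((d : ℝ) / 2) := by
        rw [← hc2, ← hbase]
    _ = 2 ^ b * (2 / (2 + h)) ^ ((d : ℝ) / 2) *
          ((1 / 2 * c) ^ b * (π / (b / 2)) ^ ((d : ℝ) / 2)) := by
        rw [mul_rpow (x := 2) (by norm_num) (by positivity),
          mul_rpow (x := 2 / (2 + h)) (by positivity) (by positivity)]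
        ring
    _ ≤ 2 * (2 / (2 + h)) ^ ((d : ℝ) / 2) * ∫ x, mixture c μ x ^ b := by gcongr

lemma flow_halfspace_le (hc : 0 < c) (hβ : ∀ i, 0 < β i) (hβ1 : ∀ i, β i ≤ 1) {b₀ : ℝ}
    (hb₀ : ∀ i, b₀ ≤ β i) (hr : ∀ i, 0 ≤ r i) (hr_sum : ∑ i, r i = 1) {α : ℝ} (hα : 0 ≤ α)
    (q : Fin T → Fin T → ℝ) {h : ℝ} (hh : 0 < h) :
    flow ((base2 T d).withDensity fun p => ENNReal.ofReal (temperedDensity c μ β r p))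
        (stKernel α q (fun i x => gaussE x (2 * h / β i)) (fun i x y => gaussDens x (2 * h / β i) y)
          (temperedDensity c μ β r))
        (Prod.snd ⁻¹' {x | ⟪x, μ⟫ < 0}) ≤
      2 * (2 / (2 + h)) ^ ((d : ℝ) / 2) * exp (-(b₀ * ‖μ‖ ^ 2 / (2 + h))) := by
  have hK : 0 ≤ 2 * (2 / (2 + h)) ^ ((d : ℝ) / 2) * exp (-(b₀ * ‖μ‖ ^ 2 / (2 + h))) := by
    positivity
  have hcoeff : ∀ i, r i / (∫ z, mixture c μ z ^ β i) * c ^ β i *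
      ((4 * π / (β i * (2 + h))) ^ ((d : ℝ) / 2) * exp (-(β i * ‖μ‖ ^ 2 / (2 + h)))) ≤
        r i * (2 * (2 / (2 + h)) ^ ((d : ℝ) / 2) * exp (-(b₀ * ‖μ‖ ^ 2 / (2 + h)))) := fun i =>
    calc _ = r i * (c ^ β i * (4 * π / (β i * (2 + h))) ^ ((d : ℝ) / 2) /
          (∫ z, mixture c μ z ^ β i) * exp (-(β i * ‖μ‖ ^ 2 / (2 + h)))) := by ring
      _ ≤ _ := by
        gcongr ?_ * (?_ * exp (-(?_ * _ / _)))
        · exact hr i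
        · exact rpow_mul_div_integral_mixture_rpow_le hc (hβ i) (hβ1 i) hh
        · exact hb₀ i
  refine ENNReal.toReal_le_of_le_ofReal hK ?_
  calc _ ≤ ENNReal.ofReal (1 - α) * ∑ i, ∫⁻ x in {x | ⟪x, μ⟫ < 0}, ∫⁻ y in {x | ⟪x, μ⟫ < 0}ᶜ,
          ENNReal.ofReal √(temperedDensity c μ β r (i, x) * temperedDensity c μ β r (i, y))
          ∂gaussE x (2 * h / β i) :=
        setLIntegral_stKernel_compl_le (Qi := fun i x => gaussE x (2 * h / β i))
          (qd := fun i x y => gaussDens x (2 * h / β i) y) measurable_temperedDensity.ennreal_ofReal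
          (fun p => temperedDensity_nonneg hc.le (hr p.1)) (fun i x y => gaussDens_comm _ y x)
          (fun i x y => (gaussDens_pos (div_pos (by linarith) (hβ i)) x y).ne')
          (measurableSet_inner_neg μ)
    _ ≤ 1 * ∑ i, ENNReal.ofReal
          (r i * (2 * (2 / (2 + h)) ^ ((d : ℝ) / 2) * exp (-(b₀ * ‖μ‖ ^ 2 / (2 + h))))) := by
        gcongr with i
        · exact ENNReal.ofReal_le_one.2 (by linarith)
        · exact (lintegral_halfspace_sqrt_temperedDensity_le hc.le (hr i) (hβ i) hh).trans
            (ENNReal.ofReal_le_ofReal (hcoeff i))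
    _ = _ := by
        rw [one_mul, ← ENNReal.ofReal_sum_of_nonneg fun i _ => mul_nonneg (hr i) hK,
          ← Finset.sum_mul, hr_sum, one_mul]

end TemperedGaussianMixture

end ST

theorem stmt15_general (d T : ℕ) (hd : 0 < d) (hT : 0 < T)
    (D : ℝ) (hD : 0 < D)
    (μ1 μ2 : ST.E d)
    (hμ1 : μ1 = EuclideanSpace.single (⟨0, hd⟩ : Fin d) D) (hμ2 : μ2 = -μ1)
    (pun : ST.E d → ℝ)
    (hpun : ∀ x, pun x = 1 / 2 * (2 * Real.pi) ^ (-(d : ℝ) / 2) *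
      (Real.exp (-‖x - μ1‖ ^ 2 / 2) + Real.exp (-‖x - μ2‖ ^ 2 / 2)))
    (β : Fin T → ℝ) (hβpos : ∀ i, 0 < β i) (hβmono : Monotone β)
    (hβlast : β ⟨T - 1, Nat.sub_lt hT one_pos⟩ = 1)
    (r : Fin T → ℝ) (hr : ∀ i, 0 < r i) (hrsum : ∑ i, r i = 1)
    (α : ℝ) (hα0 : 0 < α)
    (q : Fin T → Fin T → ℝ)
    (h : ℝ) (hh : 0 < h)
    (Qi : Fin T → ST.E d → Measure (ST.E d))
    (qd : Fin T → ST.E d → ST.E d → ℝ)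
    (hQi : ∀ i x, Qi i x = ST.gaussE x (2 * h / β i))
    (hqd : ∀ i x y, qd i x y = ST.gaussDens x (2 * h / β i) y)
    (Zs : Fin T → ℝ) (hZs : ∀ i, Zs i = ∫ x : ST.E d, pun x ^ β i)
    (ρstar : Fin T × ST.E d → ℝ)
    (hρstar : ∀ p, ρstar p = r p.1 * pun p.2 ^ β p.1 / Zs p.1)
    (PiStar : Measure (Fin T × ST.E d))
    (hPiStar : PiStar = (ST.base2 T d).withDensity fun p => ENNReal.ofReal (ρstar p))
    (Pstar : Fin T × ST.E d → Measure (Fin T × ST.E d))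
    (hPstar : Pstar = ST.stKernel α q Qi qd ρstar)
    (s : ℝ) (hs : s < 1 / 2) :
    ST.sCond PiStar Pstar s ≤
      4 / (1 - 2 * s) * (2 / (2 + h)) ^ ((d : ℝ) / 2) *
        Real.exp (-(β ⟨0, hT⟩ * D ^ 2 / (2 + h))) := by
  obtain rfl : Qi = fun i x => ST.gaussE x (2 * h / β i) := funext fun i => funext (hQi i)
  obtain rfl : qd = fun i x y => ST.gaussDens x (2 * h / β i) y :=
    funext fun i => funext fun x => funext (hqd i x)
  obtain rfl : pun = ST.mixture ((2 * Real.pi) ^ (-(d : ℝ) / 2)) μ1 := funext fun x => by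
    rw [hpun, ST.mixture, hμ2, sub_neg_eq_add]
  obtain rfl : ρstar = ST.temperedDensity ((2 * Real.pi) ^ (-(d : ℝ) / 2)) μ1 β r :=
    funext fun p => by rw [hρstar, ST.temperedDensity, hZs]
  subst hPiStar hPstar
  have hc : 0 < (2 * Real.pi) ^ (-(d : ℝ) / 2) := by positivity
  have hμ1_norm : ‖μ1‖ = D := by rw [hμ1, PiLp.norm_single, Real.norm_of_nonneg hD.le]
  have hμ1_ne : μ1 ≠ 0 := norm_ne_zero_iff.1 (hμ1_norm ▸ hD.ne')
  have hβ1 : ∀ i, β i ≤ 1 := fun i => hβlast ▸ hβmono (Fin.le_def.2 (Nat.le_sub_one_of_lt i.isLt))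
  have hβ0 : ∀ i, β ⟨0, hT⟩ ≤ β i := fun i => hβmono (Fin.le_def.2 (Nat.zero_le _))
  have hA := ST.withDensity_temperedDensity_halfspace hμ1_ne hc hβpos (fun i => (hr i).le) hrsum
  have hflow := ST.flow_halfspace_le (μ := μ1) hc hβpos hβ1 hβ0 (fun i => (hr i).le) hrsum
    hα0.le q hh
  rw [hμ1_norm] at hflow
  calc _ ≤ _ := ST.sCond_le_flow_div (measurable_snd (ST.measurableSet_inner_neg μ1))
        (by rw [hA]; norm_num; linarith) (by rw [hA]; norm_num)
    _ ≤ 2 * (2 / (2 + h)) ^ ((d : ℝ) / 2) * Real.exp (-(β ⟨0, hT⟩ * D ^ 2 / (2 + h))) /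
          (1 / 2 - s) := by
        rw [hA, ENNReal.toReal_inv, ENNReal.toReal_ofNat, inv_eq_one_div]
        exact div_le_div_of_nonneg_right hflow (by linarith)
    _ = _ := by
        field_simp
        ring

/-- Necessary condition on `β₁`: for the symmetric two-component Gaussian
mixture target with modes `±(D,0,…,0)` and RWM proposals of step size `h/β_i`, the
s-conductance of simulated tempering satisfies
`Φ_s(P*) ≤ (4/(1−2s))·(2/(2+h))^{d/2}·exp(−β₁D²/(2+h))`. -/
theorem stmt15 (d T : ℕ) (hd : 0 < d) (hT : 0 < T)
    (D : ℝ) (hD : 0 < D)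
    (μ1 μ2 : ST.E d)
    (hμ1 : μ1 = EuclideanSpace.single (⟨0, hd⟩ : Fin d) D) (hμ2 : μ2 = -μ1)
    (pun : ST.E d → ℝ)
    (hpun : ∀ x, pun x = 1 / 2 * (2 * Real.pi) ^ (-(d : ℝ) / 2) *
      (Real.exp (-‖x - μ1‖ ^ 2 / 2) + Real.exp (-‖x - μ2‖ ^ 2 / 2)))
    (β : Fin T → ℝ) (hβpos : ∀ i, 0 < β i) (hβmono : Monotone β)
    (hβlast : β ⟨T - 1, Nat.sub_lt hT one_pos⟩ = 1)
    (r : Fin T → ℝ) (hr : ∀ i, 0 < r i) (hrsum : ∑ i, r i = 1)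
    (α : ℝ) (hα0 : 0 < α) (hα1 : α < 1)
    (q : Fin T → Fin T → ℝ) (hqnn : ∀ i i', 0 ≤ q i i') (hqrow : ∀ i, ∑ i', q i i' = 1)
    (h : ℝ) (hh : 0 < h)
    (Qi : Fin T → ST.E d → Measure (ST.E d))
    (qd : Fin T → ST.E d → ST.E d → ℝ)
    (hQi : ∀ i x, Qi i x = ST.gaussE x (2 * h / β i))
    (hqd : ∀ i x y, qd i x y = ST.gaussDens x (2 * h / β i) y)
    (Zs : Fin T → ℝ) (hZs : ∀ i, Zs i = ∫ x : ST.E d, pun x ^ β i)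
    (ρstar : Fin T × ST.E d → ℝ)
    (hρstar : ∀ p, ρstar p = r p.1 * pun p.2 ^ β p.1 / Zs p.1)
    (PiStar : Measure (Fin T × ST.E d))
    (hPiStar : PiStar = (ST.base2 T d).withDensity fun p => ENNReal.ofReal (ρstar p))
    (Pstar : Fin T × ST.E d → Measure (Fin T × ST.E d))
    (hPstar : Pstar = ST.stKernel α q Qi qd ρstar)
    (s : ℝ) (hs0 : 0 ≤ s) (hs : s < 1 / 2) :
    ST.sCond PiStar Pstar s ≤
      4 / (1 - 2 * s) * (2 / (2 + h)) ^ ((d : ℝ) / 2) *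
        Real.exp (-(β ⟨0, hT⟩ * D ^ 2 / (2 + h))) :=
  stmt15_general d T hd hT D hD μ1 μ2 hμ1 hμ2 pun hpun β hβpos hβmono hβlast r hr hrsum α hα0 q h hh
    Qi qd hQi hqd Zs hZs ρstar hρstar PiStar hPiStar Pstar hPstar s hs
end
end

section
/- Let f: ℝ^d → ℝ be differentiable, L-smooth and convex, let w_1,…,w_K > 0 sum to one, let μ_1,…,μ_K ∈ ℝ^d with D = max_j ‖μ_j‖, and define U(x) = −log Σ_{j=1}^K w_j e^{−f(x−μ_j)}. Then: (a) ‖∇U(x) − ∇f(x)‖ ≤ L·D for all x ∈ ℝ^d; and (b) U(y) − U(x) − ∇U(x)ᵀ(y−x) ≤ (L/2)‖y−x‖² for all x, y ∈ ℝ^d. -/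
open MeasureTheory
open scoped ENNReal RealInnerProductSpace

noncomputable section

/-! `∇U(x)` is the average of the shifted gradients `∇f(x - μⱼ)` under the Gibbs
weights `θⱼ ∝ wⱼ e^{-f(x - μⱼ)}`. A convex `L`-smooth function has an `L`-Lipschitz gradient
(co-coercivity), so every `∇f(x - μⱼ)` lies within `L‖μⱼ‖ ≤ L D` of `∇f(x)`, and so does their
convex combination. For the upper bound, Jensen's inequality for `exp` gives
`U(y) - U(x) ≤ ∑ⱼ θⱼ (f(y - μⱼ) - f(x - μⱼ))`, and each difference is controlled by the
`L`-smoothness of `f`. -/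

open Real Finset InnerProductSpace

section SmoothConvex

variable {F : Type*} [NormedAddCommGroup F] [InnerProductSpace ℝ F] {f : F → ℝ} {f' : F → F}
  {L : ℝ}

theorem sq_norm_sub_div_le_of_smooth_of_convex (hL : 0 < L)
    (hsmooth : ∀ x y, f y - f x - ⟪f' x, y - x⟫ ≤ L / 2 * ‖y - x‖ ^ 2)
    (hconvex : ∀ x y, 0 ≤ f y - f x - ⟪f' x, y - x⟫) (u v : F) :
    ‖f' v - f' u‖ ^ 2 / (2 * L) ≤ f v - f u - ⟪f' u, v - u⟫ := by
  set g := f' v - f' u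
  -- `z` minimizes the quadratic upper bound at `v` of `f - ⟪f' u, ·⟫`, whose minimum is at `u`
  set z := v - L⁻¹ • g with hz
  have hlower := hconvex u z
  have hupper := hsmooth v z
  have hzu : z - u = (v - u) - L⁻¹ • g := by rw [hz]; abel
  have hzv : z - v = -(L⁻¹ • g) := by rw [hz]; abel
  have hg : ⟪f' v, g⟫ - ⟪f' u, g⟫ = ‖g‖ ^ 2 := by
    rw [← inner_sub_left, real_inner_self_eq_norm_sq]
  rw [hzu, inner_sub_right, real_inner_smul_right] at hlower
  rw [hzv, inner_neg_right, real_inner_smul_right, norm_neg, norm_smul, mul_pow,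
    Real.norm_of_nonneg (inv_nonneg.2 hL.le)] at hupper
  have key : ‖g‖ ^ 2 / (2 * L) =
      L⁻¹ * (⟪f' v, g⟫ - ⟪f' u, g⟫) - L / 2 * (L⁻¹ ^ 2 * ‖g‖ ^ 2) := by
    rw [hg]; field_simp; ring
  linarith

theorem norm_sub_le_of_smooth_of_convex (hL : 0 < L)
    (hsmooth : ∀ x y, f y - f x - ⟪f' x, y - x⟫ ≤ L / 2 * ‖y - x‖ ^ 2)
    (hconvex : ∀ x y, 0 ≤ f y - f x - ⟪f' x, y - x⟫) (u v : F) :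
    ‖f' v - f' u‖ ≤ L * ‖v - u‖ := by
  have h := (sq_norm_sub_div_le_of_smooth_of_convex hL hsmooth hconvex u v).trans (hsmooth u v)
  rw [div_le_iff₀ (by positivity)] at h
  refine (pow_le_pow_iff_left₀ (norm_nonneg _) (by positivity) two_ne_zero).1 ?_
  nlinarith

end SmoothConvex

section GibbsWeight

variable {ι : Type*} [Fintype ι] {w : ι → ℝ}

def gibbsWeight (w b : ι → ℝ) (j : ι) : ℝ :=
  w j * exp (b j) / ∑ i, w i * exp (b i)

theorem sum_mul_exp_pos [Nonempty ι] (hw : ∀ j, 0 < w j) (b : ι → ℝ) :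
    0 < ∑ j, w j * exp (b j) :=
  sum_pos (fun j _ => mul_pos (hw j) (exp_pos _)) univ_nonempty

theorem gibbsWeight_nonneg (hw : ∀ j, 0 ≤ w j) (b : ι → ℝ) (j : ι) : 0 ≤ gibbsWeight w b j :=
  div_nonneg (mul_nonneg (hw j) (exp_pos _).le)
    (sum_nonneg fun i _ => mul_nonneg (hw i) (exp_pos _).le)

theorem sum_gibbsWeight [Nonempty ι] (hw : ∀ j, 0 < w j) (b : ι → ℝ) :
    ∑ j, gibbsWeight w b j = 1 := by
  simp only [gibbsWeight, ← sum_div]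
  exact div_self (sum_mul_exp_pos hw b).ne'

theorem sum_gibbsWeight_mul_sub_le_log_sub [Nonempty ι] (hw : ∀ j, 0 < w j) (a b : ι → ℝ) :
    ∑ j, gibbsWeight w b j * (a j - b j) ≤
      log (∑ j, w j * exp (a j)) - log (∑ j, w j * exp (b j)) := by
  have hSb := sum_mul_exp_pos hw b
  have hreweight : ∑ j, w j * exp (a j) =
      (∑ j, w j * exp (b j)) * ∑ j, gibbsWeight w b j * exp (a j - b j) := by
    rw [mul_sum]
    refine sum_congr rfl fun j _ => ?_
    rw [gibbsWeight, exp_sub]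
    field_simp
  have hjensen : exp (∑ j, gibbsWeight w b j * (a j - b j)) ≤
      ∑ j, gibbsWeight w b j * exp (a j - b j) := by
    simpa only [smul_eq_mul] using
      convexOn_exp.map_sum_le (fun j _ => gibbsWeight_nonneg (fun j => (hw j).le) b j)
        (sum_gibbsWeight hw b) (fun j _ => Set.mem_univ (a j - b j))
  rw [le_sub_iff_add_le', ← log_exp (∑ j, gibbsWeight w b j * (a j - b j)),
    ← log_mul hSb.ne' (exp_pos _).ne', hreweight]
  exact log_le_log (by positivity) (mul_le_mul_of_nonneg_left hjensen hSb.le)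

end GibbsWeight

section MixturePotential

variable {F : Type*} [NormedAddCommGroup F] [InnerProductSpace ℝ F]
  {ι : Type*} [Fintype ι] [Nonempty ι] {w : ι → ℝ} {g : ι → F → ℝ}

theorem hasGradientAt_neg_log_sum_mul_exp_neg [CompleteSpace F] (hw : ∀ j, 0 < w j)
    {g' : ι → F} {x : F} (hg : ∀ j, HasGradientAt (g j) (g' j) x) :
    HasGradientAt (fun y => -log (∑ j, w j * exp (-g j y)))
      (∑ j, gibbsWeight w (fun j => -g j x) j • g' j) x := by
  have hsum : HasFDerivAt (fun y => ∑ j, w j * exp (-g j y))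
      (∑ j, (-(w j * exp (-g j x))) • toDual ℝ F (g' j)) x := by
    refine HasFDerivAt.fun_sum fun j _ => ?_
    refine ((hasGradientAt_iff_hasFDerivAt.1 (hg j)).neg.exp.const_mul (w j)).congr_fderiv ?_
    module
  rw [hasGradientAt_iff_hasFDerivAt]
  refine ((hasDerivAt_log (sum_mul_exp_pos hw _).ne').comp_hasFDerivAt x hsum).neg.congr_fderiv ?_
  rw [map_sum, smul_sum, ← sum_neg_distrib]
  refine sum_congr rfl fun j _ => ?_
  rw [LinearIsometryEquiv.map_smul, smul_smul, ← neg_smul, gibbsWeight]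
  congr 1
  field_simp

theorem neg_log_sum_mul_exp_neg_sub_le (hw : ∀ j, 0 < w j) (g' : ι → F → F) {L : ℝ}
    (hsmooth : ∀ j x y, g j y - g j x - ⟪g' j x, y - x⟫ ≤ L / 2 * ‖y - x‖ ^ 2) (x y : F) :
    -log (∑ j, w j * exp (-g j y)) - -log (∑ j, w j * exp (-g j x)) -
        ⟪∑ j, gibbsWeight w (fun j => -g j x) j • g' j x, y - x⟫ ≤ L / 2 * ‖y - x‖ ^ 2 := by
  set θ := gibbsWeight w (fun j => -g j x)
  have hjensen := sum_gibbsWeight_mul_sub_le_log_sub hw (fun j => -g j y) (fun j => -g j x)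
  have hsmooth_avg : ∑ j, θ j * (g j y - g j x) ≤
      ∑ j, θ j * ⟪g' j x, y - x⟫ + L / 2 * ‖y - x‖ ^ 2 := by
    calc ∑ j, θ j * (g j y - g j x)
        ≤ ∑ j, θ j * (⟪g' j x, y - x⟫ + L / 2 * ‖y - x‖ ^ 2) :=
          sum_le_sum fun j _ => mul_le_mul_of_nonneg_left (by linarith [hsmooth j x y])
            (gibbsWeight_nonneg (fun j => (hw j).le) _ j)
      _ = ∑ j, θ j * ⟪g' j x, y - x⟫ + L / 2 * ‖y - x‖ ^ 2 := by
          simp only [mul_add, sum_add_distrib, ← sum_mul, θ, sum_gibbsWeight hw, one_mul]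
  have hinner : ⟪∑ j, θ j • g' j x, y - x⟫ = ∑ j, θ j * ⟪g' j x, y - x⟫ := by
    simp only [sum_inner, real_inner_smul_left]
  simp only [neg_sub_neg, ← neg_sub (g _ y), mul_neg, sum_neg_distrib] at hjensen
  linarith

end MixturePotential

theorem stmt17_general (d K : ℕ)
    (f : ST.E d → ℝ) (L : ℝ) (hL : 0 < L)
    (hdiff : Differentiable ℝ f)
    (hsmooth : ST.LSmooth L f)
    (hconvex : ∀ x y : ST.E d, 0 ≤ f y - f x - (inner ℝ (gradient f x) (y - x) : ℝ))
    (w : Fin K → ℝ) (hw : ∀ j, 0 < w j)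
    (μm : Fin K → ST.E d)
    (D : ℝ) (hD : IsGreatest (Set.range fun j => ‖μm j‖) D)
    (U : ST.E d → ℝ)
    (hU : ∀ x, U x = -Real.log (∑ j, w j * Real.exp (-f (x - μm j)))) :
    (∀ x : ST.E d, ‖gradient U x - gradient f x‖ ≤ L * D) ∧
      (∀ x y : ST.E d,
        U y - U x - (inner ℝ (gradient U x) (y - x) : ℝ) ≤ L / 2 * ‖y - x‖ ^ 2) := by
  have : Nonempty (Fin K) := hD.1.nonempty
  have hgradU (x : ST.E d) : gradient U x =
      ∑ j, gibbsWeight w (fun j => -f (x - μm j)) j • gradient f (x - μm j) := by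
    rw [funext hU]
    refine (hasGradientAt_neg_log_sum_mul_exp_neg hw fun j => ?_).gradient
    exact hasGradientAt_iff_hasFDerivAt.2
      ((hasFDerivAt_comp_sub (μm j)).2 (hdiff _).hasGradientAt.hasFDerivAt)
  refine ⟨fun x => ?_, fun x y => ?_⟩
  · rw [hgradU, ← dist_eq_norm, ← Metric.mem_closedBall]
    refine (convex_closedBall _ _).sum_mem
      (fun j _ => gibbsWeight_nonneg (fun j => (hw j).le) _ j) (sum_gibbsWeight hw _) fun j _ => ?_
    rw [Metric.mem_closedBall, dist_eq_norm]
    calc ‖gradient f (x - μm j) - gradient f x‖ ≤ L * ‖x - μm j - x‖ :=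
          norm_sub_le_of_smooth_of_convex hL hsmooth hconvex x (x - μm j)
      _ ≤ L * D := by
          rw [sub_sub_cancel_left, norm_neg]
          exact mul_le_mul_of_nonneg_left (hD.2 ⟨j, rfl⟩) hL.le
  · rw [hU, hU, hgradU]
    refine neg_log_sum_mul_exp_neg_sub_le (g := fun j x => f (x - μm j)) hw
      (fun j x => gradient f (x - μm j)) (fun j x y => ?_) x y
    simpa only [sub_sub_sub_cancel_right] using hsmooth (x - μm j) (y - μm j)

/-- Gradient bounds for the mixture potential: for `L`-smooth convex `f`,
`U(x) = −log Σ_j w_j e^{−f(x−μ_j)}` satisfies `‖∇U(x) − ∇f(x)‖ ≤ L·D` with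
`D = max_j ‖μ_j‖`, and `U` is `L`-smooth in the sense that
`U(y) − U(x) − ⟨∇U(x), y−x⟩ ≤ (L/2)‖y−x‖²`. -/
theorem stmt17 (d K : ℕ) (hK : 0 < K)
    (f : ST.E d → ℝ) (L : ℝ) (hL : 0 < L)
    (hdiff : Differentiable ℝ f)
    (hsmooth : ST.LSmooth L f)
    (hconvex : ∀ x y : ST.E d, 0 ≤ f y - f x - (inner ℝ (gradient f x) (y - x) : ℝ))
    (w : Fin K → ℝ) (hw : ∀ j, 0 < w j) (hwsum : ∑ j, w j = 1)
    (μm : Fin K → ST.E d)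
    (D : ℝ) (hD : IsGreatest (Set.range fun j => ‖μm j‖) D)
    (U : ST.E d → ℝ)
    (hU : ∀ x, U x = -Real.log (∑ j, w j * Real.exp (-f (x - μm j)))) :
    (∀ x : ST.E d, ‖gradient U x - gradient f x‖ ≤ L * D) ∧
      (∀ x y : ST.E d,
        U y - U x - (inner ℝ (gradient U x) (y - x) : ℝ) ≤ L / 2 * ‖y - x‖ ^ 2) :=
  stmt17_general d K f L hL hdiff hsmooth hconvex w hw μm D hD U hU
end
end

section
/- Let T ≥ 1 and K ≥ 1 be integers, let (r_i)_{i∈[T]} and (w_j)_{j∈[K]} be strictly positive probability vectors, and let P̄ be any Markov transition matrix on [T]×[K] that is reversible with respect to π(i,j) = r_i·w_j. Then λ(P̄) ≥ (1/(2T))·min{ Λ₁, Λ₂ }, where Λ₁ = min_{i∈[T−1], j∈[K]} r_i·P̄((i,j),(i+1,j)) and Λ₂ = min_{j,j'∈[K]} ( min_{i∈[T]} r_i / w_{j'} )·P̄((1,j),(1,j')). -/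
open MeasureTheory
open scoped ENNReal RealInnerProductSpace

noncomputable section

/-!
Canonical paths. Join `(i, j)` to `(i', j')` by the path that runs down column `j` to
level `0`, across to `(0, j')` and up column `j'`; it has fewer than `2T` edges, so by
Cauchy–Schwarz `(g(i', j') - g(i, j))²` is at most `2T` times the sum of the squared increments
of `g` along it. Averaging over `π ⊗ π` bounds the variance by
`T (2 ∑ⱼ wⱼ Sⱼ + ∑_{j,j'} wⱼ w_{j'} (g(0, j') - g(0, j))²)`, where `Sⱼ` is the sum of the squared
increments along column `j`. In the Dirichlet form a vertical edge carries weight at least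
`Λ₁ wⱼ` and, by reversibility, is traversed in both directions, while an edge at level `0`
carries weight at least `Λ₂ wⱼ w_{j'}`; hence `min Λ₁ Λ₂` times the same bracket is at most
`2 E(g)`.
-/

namespace ST

open Finset

theorem sum_comp_le_sum_of_injective {α β : Type*} [Fintype α] [Fintype β] {φ : α → β}
    (hφ : Function.Injective φ) {f : β → ℝ} (hf : ∀ b, 0 ≤ f b) :
    ∑ a, f (φ a) ≤ ∑ b, f b :=
  (sum_map univ ⟨φ, hφ⟩ f).symm.trans_le (sum_le_univ_sum_of_nonneg hf)

section FiniteChain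

variable {ι : Type*}

def edgeEnergy (p : ι → ℝ) (M : ι → ι → ℝ) (g : ι → ℝ) (e : ι × ι) : ℝ :=
  (g e.2 - g e.1) ^ 2 * p e.1 * M e.1 e.2

variable {p : ι → ℝ} {M : ι → ι → ℝ}

theorem edgeEnergy_nonneg (hp : ∀ k, 0 ≤ p k) (hM : ∀ k l, 0 ≤ M k l) (g : ι → ℝ)
    (e : ι × ι) : 0 ≤ edgeEnergy p M g e :=
  mul_nonneg (mul_nonneg (sq_nonneg _) (hp _)) (hM _ _)

theorem edgeEnergy_swap (hrev : ∀ k l, p k * M k l = p l * M l k) (g : ι → ℝ)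
    (e : ι × ι) : edgeEnergy p M g e.swap = edgeEnergy p M g e := by
  simp only [edgeEnergy, Prod.fst_swap, Prod.snd_swap, mul_assoc, hrev e.2, ← neg_sub (g e.2),
    neg_sq]

variable [Fintype ι]

theorem two_mul_finVariance (hp : ∑ k, p k = 1) (g : ι → ℝ) :
    2 * finVariance p g = ∑ k, ∑ l, (g l - g k) ^ 2 * p k * p l := by
  set μ := ∑ l, g l * p l
  have hcentred : ∑ l, (g l - μ) * p l = 0 := by
    simp only [sub_mul, sum_sub_distrib, ← mul_sum, hp, mul_one, sub_self, μ]
  have hexpand : ∀ k l, (g l - g k) ^ 2 * p k * p l =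
      (g l - μ) ^ 2 * p l * p k + (g k - μ) ^ 2 * p k * p l
        - 2 * ((g k - μ) * p k) * ((g l - μ) * p l) := fun k l => by ring
  simp only [hexpand, sum_add_distrib, sum_sub_distrib, ← sum_mul, ← mul_sum, hcentred, hp]
  rw [finVariance]
  ring

theorem finVariance_pos_of_ne (hp : ∀ k, 0 < p k) (hsum : ∑ k, p k = 1)
    {g : ι → ℝ} {a b : ι} (hab : g a ≠ g b) : 0 < finVariance p g := by
  have hterm_nonneg : ∀ k l, 0 ≤ (g l - g k) ^ 2 * p k * p l := fun k l =>
    mul_nonneg (mul_nonneg (sq_nonneg _) (hp k).le) (hp l).le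
  have hterm_pos : 0 < (g b - g a) ^ 2 * p a * p b :=
    mul_pos (mul_pos (pow_two_pos_of_ne_zero (sub_ne_zero.2 hab.symm)) (hp a)) (hp b)
  have hle : (g b - g a) ^ 2 * p a * p b ≤ ∑ k, ∑ l, (g l - g k) ^ 2 * p k * p l :=
    (single_le_sum (fun l _ => hterm_nonneg a l) (mem_univ b)).trans
      (single_le_sum (fun k _ => sum_nonneg fun l _ => hterm_nonneg k l) (mem_univ a))
  linarith [two_mul_finVariance hsum g]

theorem two_mul_finDirichlet (g : ι → ℝ) :
    2 * finDirichlet p M g = ∑ e, edgeEnergy p M g e := by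
  rw [finDirichlet, Fintype.sum_prod_type]
  simp only [edgeEnergy]
  ring

theorem finDirichlet_nonneg (hp : ∀ k, 0 ≤ p k) (hM : ∀ k l, 0 ≤ M k l) (g : ι → ℝ) :
    0 ≤ finDirichlet p M g := by
  have := two_mul_finDirichlet (p := p) (M := M) g
  have := sum_nonneg fun e (_ : e ∈ univ) => edgeEnergy_nonneg hp hM g e
  linarith

/-- Reversibility lets every edge listed in `up` be counted in both directions. -/
theorem sum_edgeEnergy_le_two_mul_finDirichlet {α β : Type*} [Fintype α] [Fintype β]
    (hp : ∀ k, 0 ≤ p k) (hM : ∀ k l, 0 ≤ M k l) (hrev : ∀ k l, p k * M k l = p l * M l k)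
    (g : ι → ℝ) {up : α → ι × ι} {flat : β → ι × ι}
    (hinj : Function.Injective (Sum.elim up (Sum.elim (Prod.swap ∘ up) flat))) :
    2 * ∑ a, edgeEnergy p M g (up a) + ∑ b, edgeEnergy p M g (flat b) ≤
      2 * finDirichlet p M g := by
  have h := sum_comp_le_sum_of_injective hinj (edgeEnergy_nonneg hp hM g)
  simp only [Fintype.sum_sum_type, Sum.elim_inl, Sum.elim_inr, Function.comp_apply,
    edgeEnergy_swap hrev] at h
  rw [two_mul_finDirichlet]
  linarith

theorem finGap_nonneg (hp : ∀ k, 0 ≤ p k) (hM : ∀ k l, 0 ≤ M k l) : 0 ≤ finGap p M :=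
  Real.sInf_nonneg <| by
    rintro t ⟨g, hV, rfl⟩
    exact div_nonneg (finDirichlet_nonneg hp hM g) hV.le

theorem le_finGap {c : ℝ} (hne : ∃ g, 0 < finVariance p g)
    (h : ∀ g, 0 < finVariance p g → c * finVariance p g ≤ finDirichlet p M g) :
    c ≤ finGap p M := by
  obtain ⟨g₀, hg₀⟩ := hne
  refine le_csInf ⟨_, g₀, hg₀, rfl⟩ ?_
  rintro t ⟨g, hV, rfl⟩
  exact (le_div_iff₀ hV).2 (h g hV)

end FiniteChain

theorem mul_le_of_le_iInf_div_mul {τ : Type*} [Finite τ] {r : τ → ℝ} {x w P : ℝ} (hw : 0 < w)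
    (hP : 0 ≤ P) (h : x ≤ (⨅ i, r i) / w * P) (i : τ) : x * w ≤ r i * P :=
  calc x * w ≤ (⨅ i, r i) / w * P * w := mul_le_mul_of_nonneg_right h hw.le
    _ = (⨅ i, r i) * P := by field_simp
    _ ≤ r i * P := mul_le_mul_of_nonneg_right (ciInf_le (Set.finite_range r).bddBelow i) hP

theorem sq_sub_le_of_path (u v : ℕ → ℝ) (a b : ℕ) :
    (v b - u a) ^ 2 ≤ (a + 1 + b) * (∑ k ∈ range a, (u (k + 1) - u k) ^ 2 + (v 0 - u 0) ^ 2
      + ∑ k ∈ range b, (v (k + 1) - v k) ^ 2) := by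
  let s := (range a).disjSum ((univ : Finset Unit).disjSum (range b))
  let step : ℕ ⊕ Unit ⊕ ℕ → ℝ :=
    Sum.elim (fun k => u k - u (k + 1)) (Sum.elim (fun _ => v 0 - u 0) fun k => v (k + 1) - v k)
  have hsum : ∑ e ∈ s, step e = v b - u a := by
    simp only [s, step, sum_disjSum, Sum.elim_inl, Sum.elim_inr, sum_range_sub', sum_range_sub,
      sum_const, card_univ, Fintype.card_unit, one_smul]
    ring
  have hcard : (#s : ℝ) = a + 1 + b := by
    simp only [s, card_disjSum, card_range, card_univ, Fintype.card_unit]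
    push_cast
    ring
  have hsq : ∑ e ∈ s, step e ^ 2 = ∑ k ∈ range a, (u (k + 1) - u k) ^ 2 + (v 0 - u 0) ^ 2
      + ∑ k ∈ range b, (v (k + 1) - v k) ^ 2 := by
    simp only [s, step, sum_disjSum, Sum.elim_inl, Sum.elim_inr, sum_const, card_univ,
      Fintype.card_unit, one_smul]
    rw [sum_congr rfl fun k _ => sub_sq_comm (u k) (u (k + 1)), add_assoc]
  rw [← hsum, ← hcard, ← hsq]
  exact sq_sum_le_card_mul_sum_sq

section Grid

variable {T : ℕ} {κ : Type*}

def column (g : Fin T × κ → ℝ) (j : κ) (k : ℕ) : ℝ :=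
  if h : k < T then g (⟨k, h⟩, j) else 0

def columnEnergy (g : Fin T × κ → ℝ) (j : κ) : ℝ :=
  ∑ k ∈ range (T - 1), (column g j (k + 1) - column g j k) ^ 2

theorem column_apply (g : Fin T × κ → ℝ) (j : κ) (i : Fin T) : column g j i = g (i, j) := by
  simp [column]

theorem sum_range_le_columnEnergy (g : Fin T × κ → ℝ) (j : κ) (i : Fin T) :
    ∑ k ∈ range i, (column g j (k + 1) - column g j k) ^ 2 ≤ columnEnergy g j :=
  sum_le_sum_of_subset_of_nonneg (range_subset_range.2 (by omega)) fun _ _ _ => sq_nonneg _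

theorem sq_sub_le_columnEnergy (hT : 0 < T) (g : Fin T × κ → ℝ) (i i' : Fin T) (j j' : κ) :
    (g (i', j') - g (i, j)) ^ 2 ≤ 2 * T * (columnEnergy g j
      + (g (⟨0, hT⟩, j') - g (⟨0, hT⟩, j)) ^ 2 + columnEnergy g j') := by
  have hpath := sq_sub_le_of_path (column g j) (column g j') i i'
  rw [column_apply, column_apply, show (0 : ℕ) = (⟨0, hT⟩ : Fin T) from rfl, column_apply,
    column_apply] at hpath
  refine hpath.trans (mul_le_mul ?_ ?_ (by positivity) (by positivity))
  · have := i.isLt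
    have := i'.isLt
    norm_cast
    omega
  · gcongr <;> exact sum_range_le_columnEnergy g _ _

variable [Fintype κ]

theorem sum_sum_mul_prod_weights {τ : Type*} [Fintype τ] {r : τ → ℝ} (hrsum : ∑ i, r i = 1)
    (w : κ → ℝ) (F : κ → κ → ℝ) :
    ∑ a : τ × κ, ∑ b : τ × κ, F a.2 b.2 * (r a.1 * w a.2) * (r b.1 * w b.2) =
      ∑ j, ∑ j', F j j' * w j * w j' := by
  have hmarg : ∀ f : κ → ℝ, ∑ a : τ × κ, r a.1 * f a.2 = ∑ j, f j := fun f => by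
    simp only [Fintype.sum_prod_type, ← mul_sum, ← sum_mul, hrsum, one_mul]
  calc ∑ a : τ × κ, ∑ b : τ × κ, F a.2 b.2 * (r a.1 * w a.2) * (r b.1 * w b.2)
      = ∑ a : τ × κ, r a.1 * ∑ b : τ × κ, r b.1 * (F a.2 b.2 * w a.2 * w b.2) := by
        simp only [mul_sum]
        exact sum_congr rfl fun a _ => sum_congr rfl fun b _ => by ring
    _ = ∑ a : τ × κ, r a.1 * ∑ j', F a.2 j' * w a.2 * w j' :=
        sum_congr rfl fun a _ => congrArg (r a.1 * ·) (hmarg fun j' => F a.2 j' * w a.2 * w j')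
    _ = ∑ j, ∑ j', F j j' * w j * w j' := hmarg fun j => ∑ j', F j j' * w j * w j'

theorem sum_prod_weights_eq_one {τ : Type*} [Fintype τ] {r : τ → ℝ} {w : κ → ℝ}
    (hrsum : ∑ i, r i = 1) (hwsum : ∑ j, w j = 1) : ∑ a : τ × κ, r a.1 * w a.2 = 1 := by
  simp only [Fintype.sum_prod_type, ← mul_sum, hwsum, mul_one, hrsum]

theorem finVariance_le_columnEnergy (hT : 0 < T) {r : Fin T → ℝ} {w : κ → ℝ} (hr : ∀ i, 0 ≤ r i)
    (hrsum : ∑ i, r i = 1) (hw : ∀ j, 0 ≤ w j) (hwsum : ∑ j, w j = 1) (g : Fin T × κ → ℝ) :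
    finVariance (fun a => r a.1 * w a.2) g ≤ T * (2 * ∑ j, w j * columnEnergy g j
      + ∑ j, ∑ j', (g (⟨0, hT⟩, j') - g (⟨0, hT⟩, j)) ^ 2 * w j * w j') := by
  set c : κ → κ → ℝ := fun j j' => (g (⟨0, hT⟩, j') - g (⟨0, hT⟩, j)) ^ 2
  have hsplit : ∑ j, ∑ j', (columnEnergy g j + c j j' + columnEnergy g j') * w j * w j' =
      2 * ∑ j, w j * columnEnergy g j + ∑ j, ∑ j', c j j' * w j * w j' := by
    have hleft : ∀ f : κ → ℝ, ∑ j, ∑ j', f j * w j * w j' = ∑ j, w j * f j := fun f => by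
      simp only [← mul_sum, hwsum, mul_one, mul_comm (f _)]
    have hright : ∀ f : κ → ℝ, ∑ j, ∑ j', f j' * w j * w j' = ∑ j, w j * f j := fun f => by
      rw [sum_comm, ← hleft]
      exact sum_congr rfl fun j _ => sum_congr rfl fun j' _ => by ring
    simp only [add_mul, sum_add_distrib, hleft, hright]
    ring
  have hpair : ∀ a b : Fin T × κ, (g b - g a) ^ 2 * (r a.1 * w a.2) * (r b.1 * w b.2) ≤
      2 * T * ((columnEnergy g a.2 + c a.2 b.2 + columnEnergy g b.2) * (r a.1 * w a.2)
        * (r b.1 * w b.2)) := fun a b => by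
    have hpa := mul_nonneg (hr a.1) (hw a.2)
    have hpb := mul_nonneg (hr b.1) (hw b.2)
    calc (g b - g a) ^ 2 * (r a.1 * w a.2) * (r b.1 * w b.2)
        ≤ 2 * T * (columnEnergy g a.2 + c a.2 b.2 + columnEnergy g b.2) * (r a.1 * w a.2)
          * (r b.1 * w b.2) := by
          gcongr
          exact sq_sub_le_columnEnergy hT g a.1 b.1 a.2 b.2
      _ = _ := by ring
  have h2V : 2 * finVariance (fun a => r a.1 * w a.2) g ≤ 2 * T * (2 * ∑ j, w j * columnEnergy g j
      + ∑ j, ∑ j', c j j' * w j * w j') := by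
    rw [two_mul_finVariance (sum_prod_weights_eq_one hrsum hwsum) g, ← hsplit,
      ← sum_sum_mul_prod_weights hrsum w, mul_sum]
    exact sum_le_sum fun a _ => (sum_le_sum fun b _ => hpair a b).trans_eq (mul_sum ..).symm
  linarith

theorem mul_le_two_mul_finDirichlet (hT : 0 < T) {r : Fin T → ℝ} {w : κ → ℝ}
    {P : Fin T × κ → Fin T × κ → ℝ} (hr : ∀ i, 0 ≤ r i) (hw : ∀ j, 0 ≤ w j)
    (hP : ∀ a b, 0 ≤ P a b) (hrev : ∀ a b, r a.1 * w a.2 * P a b = r b.1 * w b.2 * P b a)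
    {m : ℝ} (hm_up : ∀ k (hk : k + 1 < T) j,
      m ≤ r ⟨k, Nat.lt_of_succ_lt hk⟩ * P (⟨k, Nat.lt_of_succ_lt hk⟩, j) (⟨k + 1, hk⟩, j))
    (hm_flat : ∀ j j', m * w j' ≤ r ⟨0, hT⟩ * P (⟨0, hT⟩, j) (⟨0, hT⟩, j'))
    (g : Fin T × κ → ℝ) :
    m * (2 * ∑ j, w j * columnEnergy g j
      + ∑ j, ∑ j', (g (⟨0, hT⟩, j') - g (⟨0, hT⟩, j)) ^ 2 * w j * w j') ≤
      2 * finDirichlet (fun a => r a.1 * w a.2) P g := by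
  set p : Fin T × κ → ℝ := fun a => r a.1 * w a.2
  let up : Fin (T - 1) × κ → (Fin T × κ) × (Fin T × κ) :=
    fun e => ((⟨e.1, by omega⟩, e.2), (⟨e.1 + 1, by omega⟩, e.2))
  let flat : κ × κ → (Fin T × κ) × (Fin T × κ) := fun e => ((⟨0, hT⟩, e.1), (⟨0, hT⟩, e.2))
  have hinj : Function.Injective (Sum.elim up (Sum.elim (Prod.swap ∘ up) flat)) := by
    rintro (⟨k, j⟩ | ⟨k, j⟩ | ⟨j₁, j₂⟩) (⟨k', j'⟩ | ⟨k', j'⟩ | ⟨j₁', j₂'⟩) h <;>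
      simp [up, flat, Prod.ext_iff, Fin.ext_iff] at h ⊢ <;> omega
  have hvert : m * ∑ j, w j * columnEnergy g j ≤ ∑ e, edgeEnergy p P g (up e) := by
    calc m * ∑ j, w j * columnEnergy g j
        = ∑ e : Fin (T - 1) × κ,
            m * (w e.2 * (column g e.2 (e.1 + 1) - column g e.2 e.1) ^ 2) := by
          rw [Fintype.sum_prod_type, sum_comm, mul_sum]
          refine sum_congr rfl fun j _ => ?_
          rw [columnEnergy, mul_sum, mul_sum]
          exact (Fin.sum_univ_eq_sum_range
            (fun k => m * (w j * (column g j (k + 1) - column g j k) ^ 2)) (T - 1)).symm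
      _ ≤ ∑ e, edgeEnergy p P g (up e) := sum_le_sum fun ⟨k, j⟩ _ => by
          have hk : k.val + 1 < T := by omega
          have hlo : column g j k = g (⟨k, by omega⟩, j) := column_apply g j ⟨k, _⟩
          have hhi : column g j (k + 1) = g (⟨k + 1, hk⟩, j) := column_apply g j ⟨k + 1, hk⟩
          calc m * (w j * (column g j (k + 1) - column g j k) ^ 2)
              ≤ r ⟨k, by omega⟩ * P (⟨k, by omega⟩, j) (⟨k + 1, hk⟩, j)
                * (w j * (column g j (k + 1) - column g j k) ^ 2) :=
                mul_le_mul_of_nonneg_right (hm_up k hk j) (mul_nonneg (hw j) (sq_nonneg _))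
            _ = edgeEnergy p P g (up (k, j)) := by
                rw [hlo, hhi]
                simp only [edgeEnergy, up, p]
                ring
  have hflat : m * ∑ j, ∑ j', (g (⟨0, hT⟩, j') - g (⟨0, hT⟩, j)) ^ 2 * w j * w j' ≤
      ∑ e, edgeEnergy p P g (flat e) := by
    rw [Fintype.sum_prod_type, mul_sum]
    refine sum_le_sum fun j _ => ?_
    rw [mul_sum]
    refine sum_le_sum fun j' _ => ?_
    calc m * ((g (⟨0, hT⟩, j') - g (⟨0, hT⟩, j)) ^ 2 * w j * w j')
        = m * w j' * ((g (⟨0, hT⟩, j') - g (⟨0, hT⟩, j)) ^ 2 * w j) := by ring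
      _ ≤ r ⟨0, hT⟩ * P (⟨0, hT⟩, j) (⟨0, hT⟩, j')
          * ((g (⟨0, hT⟩, j') - g (⟨0, hT⟩, j)) ^ 2 * w j) :=
          mul_le_mul_of_nonneg_right (hm_flat j j') (mul_nonneg (sq_nonneg _) (hw j))
      _ = edgeEnergy p P g (flat (j, j')) := by
          simp only [edgeEnergy, flat, p]
          ring
  have hedges := sum_edgeEnergy_le_two_mul_finDirichlet
    (fun a => mul_nonneg (hr a.1) (hw a.2)) hP hrev g hinj
  linarith [mul_add m (2 * ∑ j, w j * columnEnergy g j)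
    (∑ j, ∑ j', (g (⟨0, hT⟩, j') - g (⟨0, hT⟩, j)) ^ 2 * w j * w j')]

theorem mul_finVariance_le_finDirichlet (hT : 0 < T) {r : Fin T → ℝ} {w : κ → ℝ}
    {P : Fin T × κ → Fin T × κ → ℝ} (hr : ∀ i, 0 ≤ r i) (hrsum : ∑ i, r i = 1)
    (hw : ∀ j, 0 ≤ w j) (hwsum : ∑ j, w j = 1) (hP : ∀ a b, 0 ≤ P a b)
    (hrev : ∀ a b, r a.1 * w a.2 * P a b = r b.1 * w b.2 * P b a) {m : ℝ} (hm : 0 ≤ m)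
    (hm_up : ∀ k (hk : k + 1 < T) j,
      m ≤ r ⟨k, Nat.lt_of_succ_lt hk⟩ * P (⟨k, Nat.lt_of_succ_lt hk⟩, j) (⟨k + 1, hk⟩, j))
    (hm_flat : ∀ j j', m * w j' ≤ r ⟨0, hT⟩ * P (⟨0, hT⟩, j) (⟨0, hT⟩, j'))
    (g : Fin T × κ → ℝ) :
    m / (2 * T) * finVariance (fun a => r a.1 * w a.2) g ≤
      finDirichlet (fun a => r a.1 * w a.2) P g := by
  have hV := mul_le_mul_of_nonneg_left (finVariance_le_columnEnergy hT hr hrsum hw hwsum g) hm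
  have hE := mul_le_mul_of_nonneg_left
    (mul_le_two_mul_finDirichlet hT hr hw hP hrev hm_up hm_flat g) (Nat.cast_nonneg T)
  rw [div_mul_eq_mul_div, div_le_iff₀ (by positivity)]
  linarith

end Grid

end ST

theorem stmt19_general (T K : ℕ) (hT : 0 < T)
    (r : Fin T → ℝ) (hr : ∀ i, 0 < r i) (hrsum : ∑ i, r i = 1)
    (w : Fin K → ℝ) (hw : ∀ j, 0 < w j) (hwsum : ∑ j, w j = 1)
    (Pbar : Fin T × Fin K → Fin T × Fin K → ℝ)
    (hnn : ∀ a b, 0 ≤ Pbar a b)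
    (hrev : ∀ a b, r a.1 * w a.2 * Pbar a b = r b.1 * w b.2 * Pbar b a)
    (Λ₁ Λ₂ : ℝ)
    (hΛ₁ : Λ₁ = sInf { v | ∃ (i : Fin T) (hi : i.val + 1 < T) (j : Fin K),
      v = r i * Pbar (i, j) (⟨i.val + 1, hi⟩, j) })
    (hΛ₂ : Λ₂ = sInf { v | ∃ j j' : Fin K,
      v = (⨅ i, r i) / w j' * Pbar (⟨0, hT⟩, j) (⟨0, hT⟩, j') }) :
    1 / (2 * T) * min Λ₁ Λ₂ ≤ ST.finGap (fun a => r a.1 * w a.2) Pbar := by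
  have hp : ∀ a : Fin T × Fin K, 0 < r a.1 * w a.2 := fun a => mul_pos (hr a.1) (hw a.2)
  set m := min Λ₁ Λ₂
  rcases le_or_gt m 0 with hm | hm
  · exact (mul_nonpos_of_nonneg_of_nonpos (by positivity) hm).trans
      (ST.finGap_nonneg (fun a => (hp a).le) hnn)
  -- `sInf ∅ = 0`, so `0 < Λ₁` provides a vertical edge, hence a function of positive variance.
  obtain ⟨-, i, hi, j, -⟩ : { v | ∃ (i : Fin T) (hi : i.val + 1 < T) (j : Fin K),
      v = r i * Pbar (i, j) (⟨i.val + 1, hi⟩, j) }.Nonempty :=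
    Set.nonempty_iff_ne_empty.2 fun h => by
      rw [h, Real.sInf_empty] at hΛ₁
      linarith [min_le_left Λ₁ Λ₂]
  have hm_up : ∀ k (hk : k + 1 < T) j, m ≤ r ⟨k, Nat.lt_of_succ_lt hk⟩ *
      Pbar (⟨k, Nat.lt_of_succ_lt hk⟩, j) (⟨k + 1, hk⟩, j) := fun k hk j =>
    (min_le_left _ _).trans <| hΛ₁ ▸ csInf_le
      ⟨0, by rintro v ⟨i, hi, j, rfl⟩; exact mul_nonneg (hr i).le (hnn _ _)⟩ ⟨_, hk, j, rfl⟩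
  have hm_flat : ∀ j j', m * w j' ≤ r ⟨0, hT⟩ * Pbar (⟨0, hT⟩, j) (⟨0, hT⟩, j') :=
    fun j j' => ST.mul_le_of_le_iInf_div_mul (hw j') (hnn _ _) ((min_le_right _ _).trans <|
      hΛ₂ ▸ csInf_le ⟨0, by
        rintro v ⟨j, j', rfl⟩
        exact mul_nonneg (div_nonneg (Real.iInf_nonneg fun i => (hr i).le) (hw j').le) (hnn _ _)⟩
      ⟨j, j', rfl⟩) _
  have hvar : 0 < ST.finVariance (fun a => r a.1 * w a.2)
      fun a : Fin T × Fin K => ((a.1 : ℕ) : ℝ) :=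
    ST.finVariance_pos_of_ne hp (ST.sum_prod_weights_eq_one hrsum hwsum)
      (a := (i, j)) (b := (⟨i + 1, hi⟩, j)) (by simp)
  refine ST.le_finGap ⟨_, hvar⟩ fun g _ => ?_
  rw [one_div_mul_eq_div]
  exact ST.mul_finVariance_le_finDirichlet hT (fun i => (hr i).le) hrsum (fun j => (hw j).le)
    hwsum hnn hrev hm.le hm_up hm_flat g

/-- Canonical-path bound for the projected chain: for any Markov
transition matrix `P̄` on `[T]×[K]` reversible with respect to `π(i,j) = r_i·w_j`,
`λ(P̄) ≥ (1/(2T))·min{Λ₁, Λ₂}` with `Λ₁, Λ₂` as in the statement. -/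
theorem stmt19 (T K : ℕ) (hT : 0 < T) (hK : 0 < K)
    (r : Fin T → ℝ) (hr : ∀ i, 0 < r i) (hrsum : ∑ i, r i = 1)
    (w : Fin K → ℝ) (hw : ∀ j, 0 < w j) (hwsum : ∑ j, w j = 1)
    (Pbar : Fin T × Fin K → Fin T × Fin K → ℝ)
    (hnn : ∀ a b, 0 ≤ Pbar a b) (hrow : ∀ a, ∑ b, Pbar a b = 1)
    (hrev : ∀ a b, r a.1 * w a.2 * Pbar a b = r b.1 * w b.2 * Pbar b a)
    (Λ₁ Λ₂ : ℝ)
    (hΛ₁ : Λ₁ = sInf { v | ∃ (i : Fin T) (hi : i.val + 1 < T) (j : Fin K),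
      v = r i * Pbar (i, j) (⟨i.val + 1, hi⟩, j) })
    (hΛ₂ : Λ₂ = sInf { v | ∃ j j' : Fin K,
      v = (⨅ i, r i) / w j' * Pbar (⟨0, hT⟩, j) (⟨0, hT⟩, j') }) :
    1 / (2 * T) * min Λ₁ Λ₂ ≤ ST.finGap (fun a => r a.1 * w a.2) Pbar :=
  stmt19_general T K hT r hr hrsum w hw hwsum Pbar hnn hrev Λ₁ Λ₂ hΛ₁ hΛ₂
end
end
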